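/- arXiv:2507.21864 — 7 statements merged into one kernel-verified Lean document; each statement's English description precedes it below -/
import Mathlib

section
/- For every finite graph G, there exists a search strategy for G of cost ns(G) in which no recontamination ever occurs, i.e., no edge that has become clean ever becomes contaminated again. -/
namespace NodeSearch

/-- A move in the node searching game: place a guard on a vertex or remove one. -/
inductive Move (V : Type*) where
  | place (v : V)
  | remove (v : V)

variable {V : Type*} [DecidableEq V]

/-- The effect of a move on the current set of guarded vertices. -/
def applyMove (U : Finset V) : Move V → Finset V
  | .place v => insert v U
  | .remove v => U.erase v

/-- The set of guarded vertices after the first `i` moves (initially there are no guards). -/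
def guardsAt (ms : List (Move V)) (i : ℕ) : Finset V :=
  (ms.take i).foldl applyMove ∅

/-- Contamination spreads from the edges in `Z` along shared endpoints that are not guarded
(i.e. not in `U`). -/
inductive Spread (G : SimpleGraph V) (U : Finset V) (Z : Set (Sym2 V)) : Sym2 V → Prop where
  | base (e : Sym2 V) (he : e ∈ Z) : Spread G U Z e
  | step (e e' : Sym2 V) (w : V) (hw : w ∉ U) (hwe : w ∈ e) (hwe' : w ∈ e')
      (he' : e' ∈ G.edgeSet) (h : Spread G U Z e) : Spread G U Z e'

/-- The contaminated edges after a move resulting in guard set `U`, given that the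
contaminated edges were `Z` before: edges with both endpoints guarded become clean,
and contamination spreads through unguarded shared endpoints. -/
def nextContam (G : SimpleGraph V) (U : Finset V) (Z : Set (Sym2 V)) : Set (Sym2 V) :=
  {e | Spread G U (Z \ {e | ∀ v ∈ e, v ∈ U}) e}

/-- The set of contaminated edges after the first `i` moves; initially all edges
are contaminated. -/
def contamAt (G : SimpleGraph V) (ms : List (Move V)) : ℕ → Set (Sym2 V)
  | 0 => G.edgeSet
  | i + 1 => nextContam G (guardsAt ms (i + 1)) (contamAt G ms i)

/-- A search strategy: a sequence of moves after which every edge is clean. -/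
def IsStrategy (G : SimpleGraph V) (ms : List (Move V)) : Prop :=
  contamAt G ms ms.length = ∅

/-- The cost of a sequence of moves: the maximum number of guards present at any time. -/
def cost (ms : List (Move V)) : ℕ :=
  (Finset.range (ms.length + 1)).sup fun i => (guardsAt ms i).card

/-- The node searching number of `G`: the minimum cost of a search strategy. -/
noncomputable def ns (G : SimpleGraph V) : ℕ :=
  sInf {c | ∃ ms : List (Move V), IsStrategy G ms ∧ cost ms = c}

/-- A sequence of moves causes no recontamination iff the set of contaminated edges
only ever shrinks. -/
def RecontFree (G : SimpleGraph V) (ms : List (Move V)) : Prop :=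
  ∀ i < ms.length, contamAt G ms (i + 1) ⊆ contamAt G ms i

end NodeSearch

section MoveAux

open NodeSearch

variable {V : Type*} [DecidableEq V]

attribute [local instance 10] Classical.propDecidable

lemma foldl_map_remove (U : Finset V) (l : List V) :
    (l.map Move.remove).foldl applyMove U = U \ l.toFinset := by
  induction l generalizing U with
  | nil => simp
  | cons a t ih =>
      simp only [List.map_cons, List.foldl_cons, List.toFinset_cons]
      rw [ih]
      show U.erase a \ t.toFinset = _
      ext x; simp [Finset.mem_erase]; tauto

lemma foldl_map_place (U : Finset V) (l : List V) :
    (l.map Move.place).foldl applyMove U = U ∪ l.toFinset := by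
  induction l generalizing U with
  | nil => simp
  | cons a t ih =>
      simp only [List.map_cons, List.foldl_cons, List.toFinset_cons]
      rw [ih]
      show insert a U ∪ t.toFinset = _
      ext x; simp

/-- The transition moves between two guard sets. -/
noncomputable def transMv (P Q : Finset V) : List (Move V) :=
  (P \ Q).toList.map Move.remove ++ (Q \ P).toList.map Move.place

lemma Ufor (P Q : Finset V) (r : ℕ) :
    ((transMv P Q).take r).foldl applyMove P =
      (P \ ((P \ Q).toList.take r).toFinset) ∪
        ((Q \ P).toList.take (r - (P \ Q).toList.length)).toFinset := by
  rw [transMv, List.take_append, List.foldl_append, List.length_map,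
    ← List.map_take, ← List.map_take, foldl_map_remove, foldl_map_place]

lemma toFinset_take_subset {l : List V} {r : ℕ} : (l.take r).toFinset ⊆ l.toFinset := by
  intro x hx
  rw [List.mem_toFinset] at hx ⊢
  exact List.take_subset r l hx

lemma toFinset_take_mono {l : List V} {r s : ℕ} (h : r ≤ s) :
    (l.take r).toFinset ⊆ (l.take s).toFinset := by
  intro x hx
  rw [List.mem_toFinset] at hx ⊢
  have h2 : l.take r = (l.take s).take r := by rw [List.take_take, Nat.min_eq_left h]
  rw [h2] at hx
  exact List.take_subset r _ hx

lemma transMv_foldl (P Q : Finset V) : (transMv P Q).foldl applyMove P = Q := by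
  have h := Ufor P Q (transMv P Q).length
  rw [List.take_length] at h
  rw [List.take_of_length_le, List.take_of_length_le] at h
  · rw [h, Finset.toList_toFinset, Finset.toList_toFinset]
    ext x; simp; tauto
  · rw [transMv]; simp
  · rw [transMv]; simp

lemma Ufor_subset (P Q : Finset V) (r : ℕ) :
    ((transMv P Q).take r).foldl applyMove P ⊆ P ∨
      ((transMv P Q).take r).foldl applyMove P ⊆ Q := by
  rw [Ufor]
  rcases le_or_gt r (P \ Q).toList.length with h | h
  · left
    rw [Nat.sub_eq_zero_of_le h]
    simp only [List.take_zero, List.toFinset_nil, Finset.union_empty]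
    exact Finset.sdiff_subset.trans (le_refl _)
  · right
    rw [List.take_of_length_le h.le, Finset.toList_toFinset]
    intro x hx
    rcases Finset.mem_union.mp hx with hx | hx
    · rcases Finset.mem_sdiff.mp hx with ⟨h1, h2⟩
      by_contra hq
      exact h2 (Finset.mem_sdiff.mpr ⟨h1, hq⟩)
    · have := toFinset_take_subset hx
      rw [Finset.toList_toFinset] at this
      exact (Finset.mem_sdiff.mp this).1

lemma inter_subset_Ufor (P Q : Finset V) (r : ℕ) :
    P ∩ Q ⊆ ((transMv P Q).take r).foldl applyMove P := by
  rw [Ufor]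
  intro x hx
  apply Finset.mem_union_left
  rw [Finset.mem_sdiff]
  refine ⟨(Finset.mem_inter.mp hx).1, fun hc => ?_⟩
  have := toFinset_take_subset hc
  rw [Finset.toList_toFinset, Finset.mem_sdiff] at this
  exact this.2 (Finset.mem_inter.mp hx).2

lemma Ufor_mono (P Q : Finset V) {r s : ℕ} (hrs : r ≤ s) {w : V} (hw : w ∈ Q)
    (h : w ∈ ((transMv P Q).take r).foldl applyMove P) :
    w ∈ ((transMv P Q).take s).foldl applyMove P := by
  rw [Ufor] at h ⊢
  rcases Finset.mem_union.mp h with h | h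
  · apply Finset.mem_union_left
    rw [Finset.mem_sdiff] at h ⊢
    refine ⟨h.1, fun hc => ?_⟩
    have := toFinset_take_subset hc
    rw [Finset.toList_toFinset, Finset.mem_sdiff] at this
    exact this.2 hw
  · exact Finset.mem_union_right _ (toFinset_take_mono (Nat.sub_le_sub_right hrs _) h)

end MoveAux
section PhaseAux

open NodeSearch

variable {V : Type*} [DecidableEq V]

attribute [local instance 10] Classical.propDecidable

/-- The move list realizing the first `j` phases of a bag sequence. -/
noncomputable def msUpTo (Bg : ℕ → Finset V) : ℕ → List (Move V)
  | 0 => []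
  | j + 1 => msUpTo Bg j ++ transMv (Bg j) (Bg (j + 1))

lemma msUpTo_prefix (Bg : ℕ → Finset V) {j k : ℕ} (h : j ≤ k) :
    (msUpTo Bg j) <+: msUpTo Bg k := by
  induction k with
  | zero => rw [Nat.le_zero.mp h]
  | succ k ih =>
      rcases Nat.le_succ_iff.mp h with h | h
      · exact (ih h).trans ⟨transMv (Bg k) (Bg (k + 1)), rfl⟩
      · rw [h]

lemma msUpTo_len_mono (Bg : ℕ → Finset V) {j k : ℕ} (h : j ≤ k) :
    (msUpTo Bg j).length ≤ (msUpTo Bg k).length :=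
  (msUpTo_prefix Bg h).length_le

lemma foldl_msUpTo (Bg : ℕ → Finset V) (hB0 : Bg 0 = ∅) (j : ℕ) :
    (msUpTo Bg j).foldl applyMove ∅ = Bg j := by
  induction j with
  | zero => simp [msUpTo, hB0]
  | succ j ih => rw [msUpTo, List.foldl_append, ih, transMv_foldl]

lemma guardsAt_msUpTo (Bg : ℕ → Finset V) (hB0 : Bg 0 = ∅) {n j : ℕ} (h : j ≤ n) :
    guardsAt (msUpTo Bg n) (msUpTo Bg j).length = Bg j := by
  obtain ⟨rest, hrest⟩ := msUpTo_prefix Bg h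
  rw [guardsAt, ← hrest, List.take_left, foldl_msUpTo Bg hB0]

lemma guardsAt_phase (Bg : ℕ → Finset V) (hB0 : Bg 0 = ∅) {n j r : ℕ} (hj : j + 1 ≤ n)
    (hr : r ≤ (transMv (Bg j) (Bg (j + 1))).length) :
    guardsAt (msUpTo Bg n) ((msUpTo Bg j).length + r) =
      ((transMv (Bg j) (Bg (j + 1))).take r).foldl applyMove (Bg j) := by
  obtain ⟨rest, hrest⟩ := msUpTo_prefix Bg hj
  rw [guardsAt, ← hrest, msUpTo, List.append_assoc, List.take_append]
  rw [List.take_of_length_le (by omega), Nat.add_sub_cancel_left,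
    List.take_append, Nat.sub_eq_zero_of_le hr, List.take_zero,
    List.append_nil, List.foldl_append, foldl_msUpTo Bg hB0]

lemma phase_decomp (Bg : ℕ → Finset V) {n t : ℕ} (hn : 1 ≤ n)
    (ht : t ≤ (msUpTo Bg n).length) :
    ∃ j, j + 1 ≤ n ∧ (msUpTo Bg j).length ≤ t ∧ t ≤ (msUpTo Bg (j + 1)).length ∧
      (∀ j', t ≤ (msUpTo Bg (j' + 1)).length → j ≤ j') := by
  have hex : ∃ j, t ≤ (msUpTo Bg (j + 1)).length := by
    refine ⟨n - 1, ?_⟩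
    rwa [Nat.sub_add_cancel hn]
  classical
  set j := Nat.find hex with hj
  refine ⟨j, ?_, ?_, Nat.find_spec hex, fun j' hj' => Nat.find_le hj'⟩
  · have h2 : t ≤ (msUpTo Bg ((n - 1) + 1)).length := by
      rwa [Nat.sub_add_cancel hn]
    have := Nat.find_le (h := hex) h2
    omega
  · rcases Nat.eq_zero_or_pos j with h0 | h0
    · rw [h0, msUpTo]; exact Nat.zero_le _
    · have := Nat.find_min hex (m := j - 1) (by omega)
      rw [show j - 1 + 1 = j by omega] at this
      omega

end PhaseAux
section StrategyAux

open NodeSearch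

variable {V : Type*} [Fintype V] [DecidableEq V]

set_option linter.unusedSectionVars false

attribute [local instance 10] Classical.propDecidable

lemma nextContam_eq (G : SimpleGraph V) (U : Finset V) (Z : Set (Sym2 V))
    (hcl : ∀ e ∈ Z, ∀ w, w ∉ U → w ∈ e → ∀ e' ∈ G.edgeSet, w ∈ e' → e' ∈ Z) :
    nextContam G U Z = Z \ {e | ∀ v ∈ e, v ∈ U} := by
  ext e
  constructor
  · intro h
    induction h with
    | base e he => exact he
    | step e e' w hw hwe hwe' he' h ih =>
        exact ⟨hcl e ih.1 w hw hwe e' he' hwe', fun hc => hw (hc w hwe')⟩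
  · intro h
    exact Spread.base e h

lemma contamAt_closed (G : SimpleGraph V) (ms : List (Move V)) (i : ℕ) :
    ∀ e ∈ contamAt G ms (i + 1), ∀ w, w ∉ guardsAt ms (i + 1) → w ∈ e →
      ∀ e' ∈ G.edgeSet, w ∈ e' → e' ∈ contamAt G ms (i + 1) := by
  intro e he w hw hwe e' he' hwe'
  exact Spread.step e e' w hw hwe hwe' he' he

lemma bags_strategy (G : SimpleGraph V) (k n : ℕ) (Bg : ℕ → Finset V)
    (hB0 : Bg 0 = ∅)
    (hcard : ∀ j ≤ n, (Bg j).card ≤ k)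
    (hint : ∀ a b c, a ≤ b → b ≤ c → c ≤ n → ∀ v, v ∈ Bg a → v ∈ Bg c → v ∈ Bg b)
    (hcov : ∀ e ∈ G.edgeSet, ∃ j, 1 ≤ j ∧ j ≤ n ∧ ∀ v ∈ e, v ∈ Bg j) :
    ∃ ms : List (Move V), IsStrategy G ms ∧ RecontFree G ms ∧ cost ms ≤ k := by
  classical
  set ms := msUpTo Bg n with hms
  set len := ms.length with hlen
  refine ⟨ms, ?_⟩
  -- guards at time 0
  have hU0 : guardsAt ms 0 = (∅ : Finset V) := by simp [guardsAt]
  -- key fact ♦ : the boundary of the ever-cleaned region is guarded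
  have key : ∀ t, t + 1 ≤ len → ∀ w, ∀ e e' : Sym2 V, e ∈ G.edgeSet → e' ∈ G.edgeSet →
      w ∈ e → w ∈ e' → (∃ t' ≤ t, ∀ v ∈ e', v ∈ guardsAt ms t') →
      (∀ t' ≤ t, ¬ ∀ v ∈ e, v ∈ guardsAt ms t') → w ∈ guardsAt ms (t + 1) := by
    intro t ht1 w e e' he he' hwe hwe' ⟨t', ht', hcov'⟩ huncov
    have hlms : ms.length = (msUpTo Bg n).length := by rw [hms]
    have hn : 1 ≤ n := by
      by_contra hc
      have : n = 0 := by omega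
      rw [this] at hms
      have : len = 0 := by rw [hlen, hms]; rfl
      omega
    -- decompose t+1
    obtain ⟨j2, hj2n, hj2a, hj2b, hj2min⟩ := phase_decomp Bg hn (show t + 1 ≤ _ from ht1)
    have hej2 : (msUpTo Bg j2).length ≤ t := by
      rcases Nat.eq_zero_or_pos j2 with h0 | h0
      · rw [h0, msUpTo]; exact Nat.zero_le _
      · by_contra hc
        have h2 : t + 1 ≤ (msUpTo Bg ((j2 - 1) + 1)).length := by
          rw [show j2 - 1 + 1 = j2 by omega]; omega
        have := hj2min _ h2
        omega
    -- decompose t'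
    obtain ⟨j1, hj1n, hj1a, hj1b, hj1min⟩ := phase_decomp Bg hn (show t' ≤ _ by omega)
    have hj1j2 : j1 ≤ j2 := hj1min j2 (by omega)
    -- the phase length identity
    have hlenph : ∀ j, (msUpTo Bg (j + 1)).length =
        (msUpTo Bg j).length + (transMv (Bg j) (Bg (j + 1))).length := by
      intro j; rw [msUpTo, List.length_append]
    -- guard formula at t'
    have hUt' : guardsAt ms t' =
        ((transMv (Bg j1) (Bg (j1 + 1))).take (t' - (msUpTo Bg j1).length)).foldl
          applyMove (Bg j1) := by
      rw [hms, ← guardsAt_phase (r := t' - (msUpTo Bg j1).length) Bg hB0 hj1n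
        (by have := hlenph j1; omega)]
      congr 1; omega
    have hUt1 : guardsAt ms (t + 1) =
        ((transMv (Bg j2) (Bg (j2 + 1))).take (t + 1 - (msUpTo Bg j2).length)).foldl
          applyMove (Bg j2) := by
      rw [hms, ← guardsAt_phase (r := t + 1 - (msUpTo Bg j2).length) Bg hB0 hj2n
        (by have := hlenph j2; omega)]
      congr 1; omega
    -- w is guarded at t'
    have hwU : w ∈ guardsAt ms t' := hcov' w hwe'
    -- so w is in Bg j1 or Bg (j1+1)
    have hwB : w ∈ Bg j1 ∨ w ∈ Bg (j1 + 1) := by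
      rw [hUt'] at hwU
      rcases Ufor_subset (Bg j1) (Bg (j1 + 1)) (t' - (msUpTo Bg j1).length) with h | h
      · exact Or.inl (h hwU)
      · exact Or.inr (h hwU)
    -- the bag containing e
    obtain ⟨m, hm1, hmn, hme⟩ := hcov e he
    have hwm : w ∈ Bg m := hme w hwe
    -- phase m ends after time t
    have hmlate : t < (msUpTo Bg m).length := by
      by_contra hc
      push_neg at hc
      refine huncov (msUpTo Bg m).length hc fun v hv => ?_
      rw [hms, guardsAt_msUpTo Bg hB0 hmn]
      exact hme v hv
    have hmj2 : j2 + 1 ≤ m := by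
      by_contra hc
      have hmle : m ≤ j2 := by omega
      have := msUpTo_len_mono Bg hmle
      omega
    -- case analysis on which bag contains w
    have main : ∀ a, a ≤ j2 → w ∈ Bg a → w ∈ guardsAt ms (t + 1) := by
      intro a ha hwa
      have h1 : w ∈ Bg j2 := hint a j2 m ha (by omega) (by omega) w hwa hwm
      have h2 : w ∈ Bg (j2 + 1) := hint a (j2 + 1) m (by omega) hmj2 (by omega) w hwa hwm
      rw [hUt1]
      exact inter_subset_Ufor _ _ _ (Finset.mem_inter.mpr ⟨h1, h2⟩)
    rcases hwB with hwa | hwa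
    · exact main j1 hj1j2 hwa
    · rcases Nat.lt_or_ge j1 j2 with hlt | hge
      · exact main (j1 + 1) (by omega) hwa
      · -- j1 = j2 : within the same phase, placements persist
        have hj12 : j1 = j2 := by omega
        rw [hj12] at hwa hUt'
        rw [hUt1]
        rw [hUt'] at hwU
        exact Ufor_mono (Bg j2) (Bg (j2 + 1)) (r := t' - (msUpTo Bg j2).length)
          (s := t + 1 - (msUpTo Bg j2).length) (by omega) hwa hwU
  -- coverage: every edge is fully guarded at some time
  have cover : ∀ e ∈ G.edgeSet, ∃ t ≤ len, ∀ v ∈ e, v ∈ guardsAt ms t := by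
    intro e he
    obtain ⟨m, hm1, hmn, hme⟩ := hcov e he
    refine ⟨(msUpTo Bg m).length, msUpTo_len_mono Bg hmn, fun v hv => ?_⟩
    rw [hms, guardsAt_msUpTo Bg hB0 hmn]
    exact hme v hv
  -- the contamination invariant
  have inv : ∀ t, t ≤ len →
      contamAt G ms t = G.edgeSet \ {e | ∃ t' ≤ t, ∀ v ∈ e, v ∈ guardsAt ms t'} := by
    intro t
    induction t with
    | zero =>
        intro _
        show G.edgeSet = _
        ext e
        simp only [Set.mem_diff, Set.mem_setOf_eq]
        constructor
        · intro he
          refine ⟨he, fun ⟨t', ht', hc⟩ => ?_⟩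
          have : t' = 0 := by omega
          rw [this, hU0] at hc
          exact absurd (hc _ (Sym2.out_fst_mem e)) (by simp)
        · exact fun h => h.1
    | succ t ih =>
        intro ht1
        have hih := ih (by omega)
        show nextContam G (guardsAt ms (t + 1)) (contamAt G ms t) = _
        rw [hih, nextContam_eq]
        · ext e
          simp only [Set.mem_diff, Set.mem_setOf_eq]
          constructor
          · rintro ⟨⟨he, hne⟩, hnc⟩
            refine ⟨he, fun ⟨t', ht', hc⟩ => ?_⟩
            rcases Nat.le_succ_iff.mp ht' with h | h
            · exact hne ⟨t', h, hc⟩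
            · rw [h] at hc; exact hnc hc
          · rintro ⟨he, hne⟩
            exact ⟨⟨he, fun ⟨t', ht', hc⟩ => hne ⟨t', by omega, hc⟩⟩,
              fun hc => hne ⟨t + 1, le_refl _, hc⟩⟩
        · rintro e ⟨he, hne⟩ w hw hwe e' he' hwe'
          refine ⟨he', fun ⟨t', ht', hc⟩ => ?_⟩
          exact hw (key t ht1 w e e' he he' hwe hwe' ⟨t', ht', hc⟩
            (fun t'' ht'' hcc => hne ⟨t'', ht'', hcc⟩))
  refine ⟨?_, ?_, ?_⟩
  · -- IsStrategy
    show contamAt G ms len = ∅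
    rw [inv len (le_refl _)]
    ext e
    simp only [Set.mem_diff, Set.mem_setOf_eq, Set.mem_empty_iff_false, iff_false, not_and,
      not_not]
    intro he
    obtain ⟨t, ht, hc⟩ := cover e he
    exact ⟨t, ht, hc⟩
  · -- RecontFree
    intro i hi
    rw [inv i (by omega), inv (i + 1) (by omega)]
    rintro e ⟨he, hne⟩
    exact ⟨he, fun ⟨t', ht', hc⟩ => hne ⟨t', by omega, hc⟩⟩
  · -- cost
    rw [cost]
    refine Finset.sup_le fun i hi => ?_
    rw [Finset.mem_range] at hi
    rcases Nat.eq_zero_or_pos n with h0 | h0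
    · have : ms = [] := by rw [hms, h0]; rfl
      have : guardsAt ms i = guardsAt ms 0 := by
        rw [this]; simp [guardsAt]
      rw [this, hU0]
      simp
    · obtain ⟨j, hjn, hja, hjb, _⟩ := phase_decomp Bg h0 (show i ≤ len by omega)
      have hlenph : (msUpTo Bg (j + 1)).length =
          (msUpTo Bg j).length + (transMv (Bg j) (Bg (j + 1))).length := by
        rw [msUpTo, List.length_append]
      have hUi : guardsAt ms i =
          ((transMv (Bg j) (Bg (j + 1))).take (i - (msUpTo Bg j).length)).foldl
            applyMove (Bg j) := by
        rw [hms, ← guardsAt_phase (r := i - (msUpTo Bg j).length) Bg hB0 hjn (by omega)]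
        congr 1; omega
      rw [hUi]
      rcases Ufor_subset (Bg j) (Bg (j + 1)) (i - (msUpTo Bg j).length) with h | h
      · exact (Finset.card_le_card h).trans (hcard j (by omega))
      · exact (Finset.card_le_card h).trans (hcard (j + 1) hjn)

end StrategyAux
section CrusadeAux

open NodeSearch

variable {V : Type*} [Fintype V] [DecidableEq V]

set_option linter.unusedSectionVars false

attribute [local instance 10] Classical.propDecidable

/-- Vertices incident to an edge in `X`. -/
noncomputable def VSf (X : Finset (Sym2 V)) : Finset V :=
  Finset.univ.filter fun v => ∃ e ∈ X, v ∈ e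

/-- Vertices incident both to an edge of `X` and an edge of `G` outside `X`. -/
noncomputable def bdf (G : SimpleGraph V) (X : Finset (Sym2 V)) : Finset V :=
  Finset.univ.filter fun v => (∃ e ∈ X, v ∈ e) ∧ ∃ e ∈ G.edgeFinset \ X, v ∈ e

/-- The guard set needed at a crusade step from `P` to `X`. -/
noncomputable def Sbag (G : SimpleGraph V) (X P : Finset (Sym2 V)) : Finset V :=
  bdf G X ∪ VSf (X \ P)

lemma mem_VSf {X : Finset (Sym2 V)} {v : V} : v ∈ VSf X ↔ ∃ e ∈ X, v ∈ e := by
  simp [VSf]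

lemma mem_bdf {G : SimpleGraph V} {X : Finset (Sym2 V)} {v : V} :
    v ∈ bdf G X ↔ (∃ e ∈ X, v ∈ e) ∧ ∃ e, e ∈ G.edgeFinset ∧ e ∉ X ∧ v ∈ e := by
  simp [bdf, Finset.mem_sdiff]
  tauto

lemma VSf_mono {X Y : Finset (Sym2 V)} (h : X ⊆ Y) : VSf X ⊆ VSf Y := by
  intro v hv
  rw [mem_VSf] at hv ⊢
  obtain ⟨e, he, hve⟩ := hv
  exact ⟨e, h he, hve⟩

/-- A crusade: a sequence of cleaned-edge sets from `∅` to all edges, each step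
requiring at most `k` guards. -/
def Cru (G : SimpleGraph V) (k n : ℕ) (X : ℕ → Finset (Sym2 V)) : Prop :=
  X 0 = ∅ ∧ X n = G.edgeFinset ∧ (∀ i ≤ n, X i ⊆ G.edgeFinset) ∧
    ∀ i < n, (Sbag G (X (i + 1)) (X i)).card ≤ k

/-- The submodularity-style exchange inequality. -/
lemma ex_card (G : SimpleGraph V) (A B P : Finset (Sym2 V)) (hBE : B ⊆ G.edgeFinset) :
    (Sbag G (A ∩ B) P).card + (bdf G (A ∪ B) ∪ VSf (B \ A)).card ≤
      (Sbag G A P).card + (Sbag G B A).card := by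
  set T1 := Sbag G (A ∩ B) P
  set T2 := bdf G (A ∪ B) ∪ VSf (B \ A)
  set R1 := Sbag G A P
  set R2 := Sbag G B A
  have hT1 : T1 ⊆ R1 ∪ R2 := by
    intro v hv
    rcases Finset.mem_union.mp hv with hv | hv
    · rw [mem_bdf] at hv
      obtain ⟨⟨e1, he1, hv1⟩, e2, he2E, he2, hv2⟩ := hv
      rw [Finset.mem_inter] at he1
      by_cases h2A : e2 ∈ A
      · -- e2 ∈ A \ B, so v ∈ bdf B ⊆ R2
        apply Finset.mem_union_right
        apply Finset.mem_union_left
        rw [mem_bdf]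
        exact ⟨⟨e1, he1.2, hv1⟩, e2, he2E, fun hc => he2 (Finset.mem_inter.mpr ⟨h2A, hc⟩), hv2⟩
      · apply Finset.mem_union_left
        apply Finset.mem_union_left
        rw [mem_bdf]
        exact ⟨⟨e1, he1.1, hv1⟩, e2, he2E, h2A, hv2⟩
    · apply Finset.mem_union_left
      apply Finset.mem_union_right
      refine VSf_mono ?_ hv
      intro e he
      rw [Finset.mem_sdiff] at he ⊢
      exact ⟨(Finset.mem_inter.mp he.1).1, he.2⟩
  have hT2 : T2 ⊆ R1 ∪ R2 := by
    intro v hv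
    rcases Finset.mem_union.mp hv with hv | hv
    · rw [mem_bdf] at hv
      obtain ⟨⟨e1, he1, hv1⟩, e2, he2E, he2, hv2⟩ := hv
      rw [Finset.mem_union] at he1
      rw [Finset.mem_union, not_or] at he2
      rcases he1 with h1 | h1
      · apply Finset.mem_union_left
        apply Finset.mem_union_left
        rw [mem_bdf]
        exact ⟨⟨e1, h1, hv1⟩, e2, he2E, he2.1, hv2⟩
      · apply Finset.mem_union_right
        apply Finset.mem_union_left
        rw [mem_bdf]
        exact ⟨⟨e1, h1, hv1⟩, e2, he2E, he2.2, hv2⟩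
    · exact Finset.mem_union_right _ (Finset.mem_union_right _ hv)
  have hT12 : T1 ∩ T2 ⊆ R1 ∩ R2 := by
    intro v hv
    rw [Finset.mem_inter] at hv
    obtain ⟨hv1, hv2⟩ := hv
    -- from T1 obtain an edge e1 ∈ A ∩ B at v
    have he1 : ∃ e1, e1 ∈ A ∩ B ∧ v ∈ e1 := by
      rcases Finset.mem_union.mp hv1 with h | h
      · rw [mem_bdf] at h
        obtain ⟨⟨e1, he1, hv1'⟩, _⟩ := h
        exact ⟨e1, he1, hv1'⟩
      · rw [mem_VSf] at h
        obtain ⟨e1, he1, hv1'⟩ := h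
        exact ⟨e1, (Finset.mem_sdiff.mp he1).1, hv1'⟩
    obtain ⟨e1, he1AB, hve1⟩ := he1
    rw [Finset.mem_inter] at he1AB
    rw [Finset.mem_inter]
    constructor
    · -- v ∈ R1
      rcases Finset.mem_union.mp hv1 with h | h
      · rw [mem_bdf] at h
        obtain ⟨_, e2, he2E, he2, hv2'⟩ := h
        rw [Finset.mem_inter, not_and_or] at he2
        rcases he2 with h2 | h2
        · apply Finset.mem_union_left
          rw [mem_bdf]
          exact ⟨⟨e1, he1AB.1, hve1⟩, e2, he2E, h2, hv2'⟩
        · -- e2 ∈ A \ B : extract an edge outside A from T2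
          rcases Finset.mem_union.mp hv2 with h3 | h3
          · rw [mem_bdf] at h3
            obtain ⟨_, e3, he3E, he3, hv3'⟩ := h3
            rw [Finset.mem_union, not_or] at he3
            apply Finset.mem_union_left
            rw [mem_bdf]
            exact ⟨⟨e1, he1AB.1, hve1⟩, e3, he3E, he3.1, hv3'⟩
          · rw [mem_VSf] at h3
            obtain ⟨e3, he3, hv3'⟩ := h3
            rw [Finset.mem_sdiff] at he3
            apply Finset.mem_union_left
            rw [mem_bdf]
            exact ⟨⟨e1, he1AB.1, hve1⟩, e3, hBE he3.1, he3.2, hv3'⟩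
      · -- v ∈ VSf ((A∩B)\P) ⊆ VSf (A\P)
        apply Finset.mem_union_right
        refine VSf_mono ?_ h
        intro e he
        rw [Finset.mem_sdiff] at he ⊢
        exact ⟨(Finset.mem_inter.mp he.1).1, he.2⟩
    · -- v ∈ R2, using e1 ∈ B and an edge outside B from T2
      rcases Finset.mem_union.mp hv2 with h3 | h3
      · rw [mem_bdf] at h3
        obtain ⟨_, e3, he3E, he3, hv3'⟩ := h3
        rw [Finset.mem_union, not_or] at he3
        apply Finset.mem_union_left
        rw [mem_bdf]
        exact ⟨⟨e1, he1AB.2, hve1⟩, e3, he3E, he3.2, hv3'⟩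
      · exact Finset.mem_union_right _ h3
  calc T1.card + T2.card = (T1 ∪ T2).card + (T1 ∩ T2).card := by
        rw [Finset.card_union_add_card_inter]
      _ ≤ (R1 ∪ R2).card + (R1 ∩ R2).card :=
        Nat.add_le_add (Finset.card_le_card (Finset.union_subset hT1 hT2))
          (Finset.card_le_card hT12)
      _ = R1.card + R2.card := Finset.card_union_add_card_inter R1 R2

end CrusadeAux
section ProgAux

open NodeSearch

variable {V : Type*} [Fintype V] [DecidableEq V]

set_option linter.unusedSectionVars false

attribute [local instance 10] Classical.propDecidable

/-- The termination measure for the exchange argument. -/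
noncomputable def cruM (G : SimpleGraph V) (n : ℕ) (X : ℕ → Finset (Sym2 V)) : ℕ :=
  (∑ i ∈ Finset.range n, (Sbag G (X (i + 1)) (X i)).card) *
      ((n + 1) * G.edgeFinset.card + 1) +
    ∑ i ∈ Finset.range (n + 1), (X i).card

lemma sdiff_inter_right (A B : Finset (Sym2 V)) : B \ (A ∩ B) = B \ A := by
  ext e; simp only [Finset.mem_sdiff, Finset.mem_inter]; tauto

lemma sdiff_union_left (A B : Finset (Sym2 V)) : (A ∪ B) \ A = B \ A := by
  ext e; simp only [Finset.mem_sdiff, Finset.mem_union]; tauto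

lemma toProg (G : SimpleGraph V) (k n : ℕ) :
    ∀ N X, Cru G k n X → cruM G n X ≤ N →
      ∃ Y, Cru G k n Y ∧ ∀ i < n, Y i ⊆ Y (i + 1) := by
  intro N
  induction N using Nat.strong_induction_on with
  | _ N ih =>
    intro X hX hM
    by_cases hprog : ∀ i < n, X i ⊆ X (i + 1)
    · exact ⟨X, hX, hprog⟩
    obtain ⟨hX0, hXn, hXE, hXc⟩ := hX
    push_neg at hprog
    obtain ⟨i, hin, hnsub⟩ := hprog
    have hi0 : i ≠ 0 := by
      intro h
      rw [h, hX0] at hnsub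
      exact hnsub (Finset.empty_subset _)
    set A := X i with hA
    set B := X (i + 1) with hB
    set P := X (i - 1) with hP
    have hi1 : i - 1 + 1 = i := by omega
    have hBE : B ⊆ G.edgeFinset := hXE (i + 1) (by omega)
    have hAE : A ⊆ G.edgeFinset := hXE i (by omega)
    have hexc := ex_card G A B P hBE
    -- the two candidate costs
    have hcim1 : (Sbag G A P).card ≤ k := by
      have := hXc (i - 1) (by omega)
      rwa [hi1] at this
    have hci : (Sbag G B A).card ≤ k := hXc i hin
    -- new crusades
    by_cases hcase : (Sbag G (A ∩ B) P).card ≤ (Sbag G A P).card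
    · -- replace X i by A ∩ B
      set Y := Function.update X i (A ∩ B) with hY
      have hYi : Y i = A ∩ B := Function.update_self i _ X
      have hYne : ∀ j, j ≠ i → Y j = X j := fun j hj => Function.update_of_ne hj _ X
      have hcost : ∀ j < n, (Sbag G (Y (j + 1)) (Y j)).card ≤
          (Sbag G (X (j + 1)) (X j)).card := by
        intro j hj
        rcases eq_or_ne j i with rfl | hji
        · -- step i : Sbag B (A ∩ B) = Sbag B A
          rw [hYi, hYne (j + 1) (by omega)]
          rw [Sbag, sdiff_inter_right]
          exact le_refl _
        rcases eq_or_ne (j + 1) i with hj1 | hj1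
        · -- step i - 1
          rw [hj1, hYi, hYne j (by omega)]
          have hji' : j = i - 1 := by omega
          rw [hji']
          exact hcase
        · rw [hYne (j + 1) hj1, hYne j hji]
      have hYcru : Cru G k n Y := by
        refine ⟨by rw [hYne 0 (Ne.symm hi0)]; exact hX0,
          by rw [hYne n (by omega)]; exact hXn, fun j hj => ?_, fun j hj => ?_⟩
        · rcases eq_or_ne j i with rfl | hji
          · rw [hYi]; exact (Finset.inter_subset_left).trans hAE
          · rw [hYne j hji]; exact hXE j hj
        · exact (hcost j hj).trans (hXc j hj)
      have hMlt : cruM G n Y < cruM G n X := by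
        have h1 : (∑ j ∈ Finset.range n, (Sbag G (Y (j + 1)) (Y j)).card) ≤
            ∑ j ∈ Finset.range n, (Sbag G (X (j + 1)) (X j)).card :=
          Finset.sum_le_sum fun j hj => hcost j (Finset.mem_range.mp hj)
        have h2 : (∑ j ∈ Finset.range (n + 1), (Y j).card) <
            ∑ j ∈ Finset.range (n + 1), (X j).card := by
          apply Finset.sum_lt_sum
          · intro j hj
            rcases eq_or_ne j i with rfl | hji
            · rw [hYi]; exact Finset.card_le_card Finset.inter_subset_left
            · rw [hYne j hji]
          · refine ⟨i, Finset.mem_range.mpr (by omega), ?_⟩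
            rw [hYi]
            apply Finset.card_lt_card
            rw [Finset.ssubset_iff_of_subset Finset.inter_subset_left]
            obtain ⟨x, hxA, hxB⟩ := Finset.not_subset.mp hnsub
            exact ⟨x, hxA, fun hc => hxB (Finset.mem_inter.mp hc).2⟩
        calc cruM G n Y ≤ (∑ j ∈ Finset.range n, (Sbag G (X (j + 1)) (X j)).card) *
              ((n + 1) * G.edgeFinset.card + 1) + ∑ j ∈ Finset.range (n + 1), (Y j).card := by
              exact Nat.add_le_add_right (Nat.mul_le_mul_right _ h1) _
          _ < cruM G n X := Nat.add_lt_add_left h2 _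
      exact ih (cruM G n Y) (by omega) Y hYcru (le_refl _)
    · -- replace X (i + 1) by A ∪ B
      have hstrict : (bdf G (A ∪ B) ∪ VSf (B \ A)).card < (Sbag G B A).card := by omega
      have hi1n : i + 1 ≠ n := by
        intro h
        rw [h, hXn] at hB
        exact hnsub (hB ▸ hAE)
      set Y := Function.update X (i + 1) (A ∪ B) with hY
      have hYi : Y (i + 1) = A ∪ B := Function.update_self (i + 1) _ X
      have hYne : ∀ j, j ≠ i + 1 → Y j = X j := fun j hj => Function.update_of_ne hj _ X
      have hcost : ∀ j < n, (Sbag G (Y (j + 1)) (Y j)).card ≤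
          (Sbag G (X (j + 1)) (X j)).card := by
        intro j hj
        rcases eq_or_ne j i with rfl | hji
        · rw [hYi, hYne j (by omega), Sbag, sdiff_union_left]
          exact hstrict.le.trans (le_refl _)
        rcases eq_or_ne j (i + 1) with rfl | hj1
        · rw [hYi, hYne (i + 1 + 1) (by omega)]
          apply Finset.card_le_card
          rw [Sbag, Sbag]
          apply Finset.union_subset_union (le_refl _)
          apply VSf_mono
          intro e he
          rw [Finset.mem_sdiff] at he ⊢
          exact ⟨he.1, fun hc => he.2 (Finset.mem_union_right _ hc)⟩
        · rw [hYne (j + 1) (by omega), hYne j hj1]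
      have hcosti : (Sbag G (Y (i + 1)) (Y i)).card < (Sbag G (X (i + 1)) (X i)).card := by
        rw [hYi, hYne i (by omega), Sbag, sdiff_union_left]
        exact hstrict
      have hYcru : Cru G k n Y := by
        refine ⟨by rw [hYne 0 (by omega)]; exact hX0,
          by rw [hYne n (Ne.symm hi1n)]; exact hXn, fun j hj => ?_, fun j hj => ?_⟩
        · rcases eq_or_ne j (i + 1) with rfl | hji
          · rw [hYi]; exact Finset.union_subset hAE hBE
          · rw [hYne j hji]; exact hXE j hj
        · exact (hcost j hj).trans (hXc j hj)
      have hMlt : cruM G n Y < cruM G n X := by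
        set W := (n + 1) * G.edgeFinset.card + 1 with hW
        have h1 : (∑ j ∈ Finset.range n, (Sbag G (Y (j + 1)) (Y j)).card) <
            ∑ j ∈ Finset.range n, (Sbag G (X (j + 1)) (X j)).card := by
          apply Finset.sum_lt_sum
          · intro j hj; exact hcost j (Finset.mem_range.mp hj)
          · exact ⟨i, Finset.mem_range.mpr hin, hcosti⟩
        have h2 : (∑ j ∈ Finset.range (n + 1), (Y j).card) < W := by
          rw [hW]
          have : ∀ j ∈ Finset.range (n + 1), (Y j).card ≤ G.edgeFinset.card := by
            intro j hj
            rw [Finset.mem_range] at hj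
            apply Finset.card_le_card
            exact hYcru.2.2.1 j (by omega)
          calc (∑ j ∈ Finset.range (n + 1), (Y j).card) ≤
              ∑ _j ∈ Finset.range (n + 1), G.edgeFinset.card := Finset.sum_le_sum this
            _ = (n + 1) * G.edgeFinset.card := by
                rw [Finset.sum_const, Finset.card_range, smul_eq_mul]
            _ < (n + 1) * G.edgeFinset.card + 1 := by omega
        set c2 := ∑ j ∈ Finset.range n, (Sbag G (Y (j + 1)) (Y j)).card
        set c1 := ∑ j ∈ Finset.range n, (Sbag G (X (j + 1)) (X j)).card
        calc cruM G n Y = c2 * W + ∑ j ∈ Finset.range (n + 1), (Y j).card := rfl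
          _ < c2 * W + W := by omega
          _ = (c2 + 1) * W := by ring
          _ ≤ c1 * W := Nat.mul_le_mul_right _ (by omega)
          _ ≤ cruM G n X := Nat.le_add_right _ _
      exact ih (cruM G n Y) (by omega) Y hYcru (le_refl _)

end ProgAux
section ExtractAux

open NodeSearch

variable {V : Type*} [Fintype V] [DecidableEq V]

set_option linter.unusedSectionVars false

attribute [local instance 10] Classical.propDecidable

lemma contamAt_subset_edgeSet (G : SimpleGraph V) (ms : List (Move V)) (i : ℕ) :
    contamAt G ms i ⊆ G.edgeSet := by
  induction i with
  | zero => exact le_refl _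
  | succ i ih =>
      intro e he
      induction he with
      | base e he => exact ih he.1
      | step e e' w hw hwe hwe' he' h ihh => exact he'

lemma strategy_crusade (G : SimpleGraph V) (ms : List (Move V)) (h : IsStrategy G ms) :
    Cru G (cost ms) ms.length
      (fun i => G.edgeFinset.filter fun e => e ∉ contamAt G ms i) := by
  have hguard : ∀ i, i + 1 ≤ ms.length → (guardsAt ms (i + 1)).card ≤ cost ms := by
    intro i hi
    exact Finset.le_sup (f := fun i => (guardsAt ms i).card)
      (Finset.mem_range.mpr (by omega))
  refine ⟨?_, ?_, fun i _ => Finset.filter_subset _ _, fun i hi => ?_⟩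
  · ext e
    simp only [Finset.mem_filter, SimpleGraph.mem_edgeFinset, Finset.notMem_empty,
      iff_false, not_and, not_not]
    exact fun he => he
  · rw [IsStrategy] at h
    ext e
    simp only [Finset.mem_filter, SimpleGraph.mem_edgeFinset, h]
    simp
  · -- the Sbag is contained in the guard set at time i + 1
    have hsub : Sbag G (G.edgeFinset.filter fun e => e ∉ contamAt G ms (i + 1))
        (G.edgeFinset.filter fun e => e ∉ contamAt G ms i) ⊆ guardsAt ms (i + 1) := by
      intro v hv
      rcases Finset.mem_union.mp hv with hv | hv
      · -- boundary vertex
        rw [mem_bdf] at hv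
        obtain ⟨⟨e1, he1, hv1⟩, e2, he2E, he2, hv2⟩ := hv
        rw [Finset.mem_filter] at he1
        have he2c : e2 ∈ contamAt G ms (i + 1) := by
          by_contra hc
          exact he2 (Finset.mem_filter.mpr ⟨he2E, hc⟩)
        by_contra hvg
        exact he1.2 (Spread.step e2 e1 v hvg hv2 hv1
          (SimpleGraph.mem_edgeFinset.mp he1.1) he2c)
      · -- endpoint of a newly cleaned edge
        rw [mem_VSf] at hv
        obtain ⟨e, he, hve⟩ := hv
        rw [Finset.mem_sdiff, Finset.mem_filter, Finset.mem_filter] at he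
        obtain ⟨⟨heE, henc⟩, hold⟩ := he
        have hec : e ∈ contamAt G ms i := by
          by_contra hc
          exact hold ⟨heE, hc⟩
        -- e is fully guarded at time i + 1
        have hfull : ∀ w ∈ e, w ∈ guardsAt ms (i + 1) := by
          by_contra hc
          push_neg at hc
          refine henc (Spread.base e ?_)
          exact ⟨hec, fun hcc => by obtain ⟨w, hw1, hw2⟩ := hc; exact hw2 (hcc w hw1)⟩
        exact hfull v hve
    exact (Finset.card_le_card hsub).trans (hguard i hi)

lemma crusade_to_bags (G : SimpleGraph V) (k n : ℕ) (X : ℕ → Finset (Sym2 V))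
    (hX : Cru G k n X) (hprog : ∀ i < n, X i ⊆ X (i + 1)) :
    ∃ Bg : ℕ → Finset V, Bg 0 = ∅ ∧ (∀ j ≤ n, (Bg j).card ≤ k) ∧
      (∀ a b c, a ≤ b → b ≤ c → c ≤ n → ∀ v, v ∈ Bg a → v ∈ Bg c → v ∈ Bg b) ∧
      (∀ e ∈ G.edgeSet, ∃ j, 1 ≤ j ∧ j ≤ n ∧ ∀ v ∈ e, v ∈ Bg j) := by
  obtain ⟨hX0, hXn, hXE, hXc⟩ := hX
  have hmono : ∀ p q, p ≤ q → q ≤ n → X p ⊆ X q := by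
    intro p q hpq hqn
    induction q with
    | zero => rw [Nat.le_zero.mp hpq]
    | succ q ihq =>
        rcases Nat.le_succ_iff.mp hpq with h | h
        · exact (ihq h (by omega)).trans (hprog q (by omega))
        · rw [h]
  refine ⟨fun j => if j = 0 then ∅ else Sbag G (X j) (X (j - 1)), by simp,
    fun j hj => ?_, fun a b c hab hbc hcn v hva hvc => ?_, fun e he => ?_⟩
  · rcases eq_or_ne j 0 with rfl | hj0
    · simp
    · simp only [if_neg hj0]
      have := hXc (j - 1) (by omega)
      rwa [show j - 1 + 1 = j by omega] at this
  · -- interval property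
    rcases eq_or_ne a 0 with rfl | ha0
    · simp at hva
    rcases eq_or_ne b a with rfl | hba
    · exact hva
    rcases eq_or_ne b c with rfl | hbc'
    · exact hvc
    have hb0 : b ≠ 0 := by omega
    simp only [if_neg ha0] at hva
    simp only [if_neg (show c ≠ 0 by omega)] at hvc
    simp only [if_neg hb0]
    -- v has an incident edge in X a and an edge outside X (c - 1)
    have he1 : ∃ e1, e1 ∈ X a ∧ v ∈ e1 := by
      rcases Finset.mem_union.mp hva with h | h
      · rw [mem_bdf] at h
        obtain ⟨⟨e1, he1, hv1⟩, _⟩ := h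
        exact ⟨e1, he1, hv1⟩
      · rw [mem_VSf] at h
        obtain ⟨e1, he1, hv1⟩ := h
        exact ⟨e1, (Finset.mem_sdiff.mp he1).1, hv1⟩
    have he2 : ∃ e2, e2 ∈ G.edgeFinset ∧ e2 ∉ X (c - 1) ∧ v ∈ e2 := by
      rcases Finset.mem_union.mp hvc with h | h
      · rw [mem_bdf] at h
        obtain ⟨_, e2, he2E, he2, hv2⟩ := h
        exact ⟨e2, he2E, fun hc => he2 (hmono (c - 1) c (by omega) hcn hc), hv2⟩
      · rw [mem_VSf] at h
        obtain ⟨e2, he2, hv2⟩ := h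
        rw [Finset.mem_sdiff] at he2
        exact ⟨e2, hXE c hcn he2.1, he2.2, hv2⟩
    obtain ⟨e1, he1a, hv1⟩ := he1
    obtain ⟨e2, he2E, he2, hv2⟩ := he2
    apply Finset.mem_union_left
    rw [mem_bdf]
    refine ⟨⟨e1, hmono a b (by omega) (by omega) he1a, hv1⟩,
      e2, he2E, fun hc => he2 (hmono b (c - 1) (by omega) (by omega) hc), hv2⟩
  · -- coverage
    have heF : e ∈ G.edgeFinset := SimpleGraph.mem_edgeFinset.mpr he
    have hex : ∃ j, e ∈ X j := ⟨n, hXn ▸ heF⟩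
    classical
    set j := Nat.find hex with hj
    have hjspec : e ∈ X j := Nat.find_spec hex
    have hj0 : j ≠ 0 := fun hc => by
      rw [hc, hX0] at hjspec
      simp at hjspec
    have hjn : j ≤ n := Nat.find_le (hXn ▸ heF)
    have hjprev : e ∉ X (j - 1) := by
      intro hc
      have := Nat.find_min hex (m := j - 1) (by omega)
      exact this hc
    refine ⟨j, by omega, hjn, fun v hv => ?_⟩
    simp only [if_neg hj0]
    apply Finset.mem_union_right
    rw [mem_VSf]
    exact ⟨e, Finset.mem_sdiff.mpr ⟨hjspec, hjprev⟩, hv⟩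

end ExtractAux
theorem stmt2 {V : Type*} [Fintype V] [DecidableEq V] (G : SimpleGraph V) :
    ∃ ms : List (NodeSearch.Move V), NodeSearch.IsStrategy G ms ∧
      NodeSearch.cost ms = NodeSearch.ns G ∧ NodeSearch.RecontFree G ms := by
  classical
  open NodeSearch in
  -- the set of strategy costs is nonempty
  have hne : {c | ∃ ms : List (Move V), IsStrategy G ms ∧ cost ms = c}.Nonempty := by
    obtain ⟨ms₁, h1, _, _⟩ := bags_strategy G (Finset.univ : Finset V).card 1
      (fun j => if j = 0 then ∅ else Finset.univ)
      (by simp)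
      (by
        intro j _
        by_cases hj : j = 0 <;> simp [hj])
      (by
        intro a b c hab hbc hcn v hva hvc
        rcases eq_or_ne b 0 with rfl | hb0
        · have : a = 0 := by omega
          rw [this] at hva
          simp at hva
        · simp [hb0])
      (fun e _ => ⟨1, le_refl _, le_refl _, fun v _ => by simp⟩)
    exact ⟨cost ms₁, ms₁, h1, rfl⟩
  obtain ⟨ms₀, hstrat₀, hcost₀⟩ := Nat.sInf_mem hne
  -- extract a crusade of cost ns G
  have hcru := strategy_crusade G ms₀ hstrat₀
  rw [hcost₀] at hcru
  show ∃ ms, IsStrategy G ms ∧ cost ms = ns G ∧ RecontFree G ms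
  -- make it progressive
  obtain ⟨Y, hYcru, hYprog⟩ := toProg G (ns G) ms₀.length
    (cruM G ms₀.length (fun i => G.edgeFinset.filter fun e => e ∉ contamAt G ms₀ i))
    _ hcru (le_refl _)
  -- convert to bags and build the monotone strategy
  obtain ⟨Bg, hB0, hcard, hint, hcov⟩ := crusade_to_bags G (ns G) ms₀.length Y hYcru hYprog
  obtain ⟨ms, h1, h2, h3⟩ := bags_strategy G (ns G) ms₀.length Bg hB0 hcard hint hcov
  exact ⟨ms, h1, le_antisymm h3 (Nat.sInf_le ⟨ms, h1, rfl⟩), h2⟩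
end

section
/- For every integer k ≥ 1, the graph G_k has pathwidth exactly k + 1. -/
/-- A path decomposition of a graph `G` with bags `B 0, …, B (n-1)` arranged along a path:
every vertex is in some bag, every edge has both endpoints in a common bag, and the bags
containing any fixed vertex form a contiguous interval. -/
def IsPathDecomp {V : Type*} (G : SimpleGraph V) (n : ℕ) (B : Fin n → Finset V) : Prop :=
  (∀ v : V, ∃ i, v ∈ B i) ∧
  (∀ u v : V, G.Adj u v → ∃ i, u ∈ B i ∧ v ∈ B i) ∧
  (∀ (v : V) (i j l : Fin n), i ≤ j → j ≤ l → v ∈ B i → v ∈ B l → v ∈ B j)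

/-- The pathwidth of `G`: the least `w` such that `G` has a path decomposition
all of whose bags have at most `w + 1` vertices. -/
noncomputable def pathwidth {V : Type*} (G : SimpleGraph V) : ℕ :=
  sInf {w | ∃ (n : ℕ) (B : Fin n → Finset V), IsPathDecomp G n B ∧ ∀ i, (B i).card ≤ w + 1}

/-- The vertices of the graph `G_k`: pairs `(x, y)` with `x ∈ {1, …, k+2}` and
`y ∈ {1, …, 3k+6}`. -/
abbrev GkVert (k : ℕ) : Type :=
  {p : ℕ × ℕ // p ∈ Finset.Icc 1 (k + 2) ×ˢ Finset.Icc 1 (3 * k + 6)}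

/-- The graph `G_k` on `{1, …, k+2} × {1, …, 3k+6}`, with column edges
`{(x,y), (x+1,y)}` for `x ∈ {1, …, k+1}` and row edges `{(x,y), (x,y+1)}`
for `x ∈ {1, …, k}`. -/
def Gk (k : ℕ) : SimpleGraph (GkVert k) :=
  SimpleGraph.fromRel fun p q =>
    (q.val.1 = p.val.1 + 1 ∧ q.val.2 = p.val.2) ∨
    (p.val.1 = q.val.1 ∧ p.val.1 ≤ k ∧ q.val.2 = p.val.2 + 1)

/-! Pathwidth is the vertex separation number: a path decomposition of width `w` yields a linear
layout in which, at every time, at most `w` placed vertices have a neighbour placed later, and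
conversely. Sweeping `G_k` column by column gives separation `k + 1`.

For the lower bound take a layout of separation `k`; let `t₁` be the time the first column `c₀`
is completed and `T` the time the first of the rows `1, …, k` is completed. Between `t₁` and `T`
each of these `k` rows is cut, so they account for the whole boundary, and no vertex of the
pendant rows `k + 1`, `k + 2` is placed strictly between `t₁` and `T`. Then each of the `3k + 5`
columns other than `c₀` is cut at time `T` or at time `t₁`, which needs more than `2k`
boundary vertices. -/

open Finset Function SimpleGraph

theorem exists_injective_refinement {V : Type*} [Fintype V] (f : V → ℕ) :
    ∃ e : V → ℕ, Injective e ∧ ∀ u v, e u ≤ e v → f u ≤ f v := by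
  set N := Fintype.card V
  let idx := Fintype.equivFin V
  have hmono : ∀ u v, f u * N + idx u ≤ f v * N + idx v → f u ≤ f v := fun u v h ↦ by
    by_contra! hlt
    have h1 := Nat.mul_le_mul_right N (Nat.succ_le_of_lt hlt)
    have h2 : (idx v : ℕ) < N := (idx v).isLt
    rw [Nat.succ_mul] at h1
    omega
  refine ⟨fun v ↦ f v * N + idx v, fun u v h ↦ idx.injective (Fin.ext ?_), hmono⟩
  have := le_antisymm (hmono u v h.le) (hmono v u h.ge)
  simp only [this] at h
  omega

theorem exists_first_completed {V ι : Type*} [Fintype V] {e : V → ℕ} (he : Injective e)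
    (cls : V → ι) {I : Finset ι} (hI : I.Nonempty) (hcls : ∀ i ∈ I, ∃ v, cls v = i) :
    ∃ i₀ ∈ I, ∃ v₀, cls v₀ = i₀ ∧ (∀ v, cls v = i₀ → e v ≤ e v₀) ∧
      ∀ i ∈ I, i ≠ i₀ → ∃ v, cls v = i ∧ e v₀ < e v := by
  classical
  have hlast : ∀ i ∈ I, ∃ v, cls v = i ∧ ∀ u, cls u = i → e u ≤ e v := fun i hi ↦ by
    obtain ⟨v, hv, hmax⟩ := (univ.filter (cls · = i)).exists_max_image e
      (by obtain ⟨v, hv⟩ := hcls i hi; exact ⟨v, by simpa using hv⟩)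
    exact ⟨v, by simpa using hv, fun u hu ↦ hmax u (by simpa using hu)⟩
  have : Nonempty V := let ⟨i, hi⟩ := hI; let ⟨v, _⟩ := hcls i hi; ⟨v⟩
  choose! last hlast hmax using hlast
  obtain ⟨i₀, hi₀, hmin⟩ := I.exists_min_image (e ∘ last) hI
  refine ⟨i₀, hi₀, last i₀, hlast i₀ hi₀, hmax i₀ hi₀, fun i hi hne ↦
    ⟨last i, hlast i hi, (hmin i hi).lt_of_ne fun h ↦ hne ?_⟩⟩
  rw [← hlast i hi, ← hlast i₀ hi₀, he h]

theorem Nat.mul_add_le_mul_add_iff {K a b c d : ℕ} (hb : b < K) (hd : d < K) :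
    a * K + b ≤ c * K + d ↔ a < c ∨ a = c ∧ b ≤ d := by
  rcases lt_trichotomy a c with h | rfl | h
  · have := Nat.mul_le_mul_right K (Nat.succ_le_of_lt h)
    rw [Nat.succ_mul] at this
    omega
  · omega
  · have := Nat.mul_le_mul_right K (Nat.succ_le_of_lt h)
    rw [Nat.succ_mul] at this
    omega

namespace SimpleGraph

variable {V : Type*} [Fintype V]

open Classical in
/-- Reading `e v` as the time at which `v` is placed: the placed vertices separating the past from
the future at time `s`, as in the vertex separation number. -/
noncomputable def layoutBoundary (G : SimpleGraph V) (e : V → ℕ) (s : ℕ) : Finset V :=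
  {u | e u ≤ s ∧ ∃ w, G.Adj u w ∧ s < e w}

open Classical in
noncomputable def layoutBag (G : SimpleGraph V) (e : V → ℕ) (s : ℕ) : Finset V :=
  {u | e u ≤ s ∧ ∃ x, (x = u ∨ G.Adj u x) ∧ s ≤ e x}

variable {G : SimpleGraph V} {e : V → ℕ} {s : ℕ}

theorem mem_layoutBoundary {u : V} :
    u ∈ G.layoutBoundary e s ↔ e u ≤ s ∧ ∃ w, G.Adj u w ∧ s < e w := by
  simp [layoutBoundary]

theorem layoutBoundary_eq_empty (h : ∀ v, e v ≤ s) : G.layoutBoundary e s = ∅ :=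
  eq_empty_of_forall_notMem fun _ hu ↦ by
    obtain ⟨-, w, -, hw⟩ := mem_layoutBoundary.1 hu
    exact (h w).not_gt hw

theorem exists_mem_layoutBoundary_of_chain {n : ℕ} (f : ℕ → V)
    (hf : ∀ m < n, G.Adj (f m) (f (m + 1))) {i j : ℕ} (hi : i ≤ n) (hj : j ≤ n)
    (hfi : e (f i) ≤ s) (hfj : s < e (f j)) : ∃ m ≤ n, f m ∈ G.layoutBoundary e s := by
  by_contra! h
  have hstep : ∀ m < n, (e (f m) ≤ s ↔ e (f (m + 1)) ≤ s) := fun m hm ↦ by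
    constructor <;> intro hle <;> by_contra! hlt
    · exact h m hm.le (mem_layoutBoundary.2 ⟨hle, _, hf m hm, hlt⟩)
    · exact h (m + 1) hm (mem_layoutBoundary.2 ⟨hle, _, (hf m hm).symm, hlt⟩)
  have hconst : ∀ m ≤ n, (e (f m) ≤ s ↔ e (f 0) ≤ s) := by
    intro m hm
    induction m with
    | zero => rfl
    | succ m ih => rw [← hstep m hm, ih (by omega)]
  exact hfj.not_ge ((hconst j hj).2 ((hconst i hi).1 hfi))

theorem mem_layoutBag {u : V} :
    u ∈ G.layoutBag e s ↔ e u ≤ s ∧ ∃ x, (x = u ∨ G.Adj u x) ∧ s ≤ e x := by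
  simp [layoutBag]

theorem isPathDecomp_layoutBag (e : V → ℕ) {n : ℕ} (hn : ∀ v, e v < n) :
    IsPathDecomp G n fun i ↦ G.layoutBag e i := by
  refine ⟨fun v ↦ ⟨⟨e v, hn v⟩, mem_layoutBag.2 ⟨le_rfl, v, .inl rfl, le_rfl⟩⟩, fun u v huv ↦ ?_,
    fun v i j l hij hjl hi hl ↦ ?_⟩
  · rcases le_total (e u) (e v) with h | h
    · exact ⟨⟨e v, hn v⟩, mem_layoutBag.2 ⟨h, v, .inr huv, le_rfl⟩,
        mem_layoutBag.2 ⟨le_rfl, v, .inl rfl, le_rfl⟩⟩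
    · exact ⟨⟨e u, hn u⟩, mem_layoutBag.2 ⟨le_rfl, u, .inl rfl, le_rfl⟩,
        mem_layoutBag.2 ⟨h, u, .inr huv.symm, le_rfl⟩⟩
  · obtain ⟨hvi, -⟩ := mem_layoutBag.1 hi
    obtain ⟨-, x, hx, hlx⟩ := mem_layoutBag.1 hl
    exact mem_layoutBag.2 ⟨hvi.trans hij, x, hx, (Fin.le_def.1 hjl).trans hlx⟩

theorem card_layoutBag_le (he : Injective e) (s : ℕ) :
    #(G.layoutBag e s) ≤ #(G.layoutBoundary e (s - 1)) + 1 := by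
  classical
  have hsub : G.layoutBag e s ⊆ G.layoutBoundary e (s - 1) ∪ ({u | e u = s} : Finset V) :=
    fun u hu ↦ by
    obtain ⟨hus, x, hx, hsx⟩ := mem_layoutBag.1 hu
    rcases hus.lt_or_eq with hlt | heq
    · rcases hx with rfl | hux
      · omega
      · exact mem_union_left _ (mem_layoutBoundary.2 ⟨by omega, x, hux, by omega⟩)
    · exact mem_union_right _ (by simpa using heq)
  have hone : #({u | e u = s} : Finset V) ≤ 1 :=
    card_le_one.2 fun a ha b hb ↦ he (by simp only [mem_filter] at ha hb; rw [ha.2, hb.2])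
  exact (card_le_card hsub).trans ((card_union_le _ _).trans (by omega))

end SimpleGraph

section Layout

variable {V : Type*} [Fintype V] {G : SimpleGraph V}

theorem exists_layout_of_isPathDecomp {n w : ℕ} {B : Fin n → Finset V}
    (hB : IsPathDecomp G n B) (hw : ∀ i, #(B i) ≤ w + 1) :
    ∃ e : V → ℕ, Injective e ∧ ∀ s, #(G.layoutBoundary e s) ≤ w := by
  classical
  obtain ⟨hcover, hedge, hconvex⟩ := hB
  have hfirst : ∀ v, ∃ i, v ∈ B i ∧ ∀ j, v ∈ B j → i ≤ j := fun v ↦ by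
    obtain ⟨i, hi, hmin⟩ := (univ.filter (v ∈ B ·)).exists_min_image id
      (by obtain ⟨i, hi⟩ := hcover v; exact ⟨i, by simpa using hi⟩)
    exact ⟨i, by simpa using hi, fun j hj ↦ hmin j (by simpa using hj)⟩
  choose f hf hfmin using hfirst
  obtain ⟨e, he, hef⟩ := exists_injective_refinement (fun v ↦ (f v : ℕ))
  refine ⟨e, he, fun s ↦ ?_⟩
  by_cases hlate : ∃ v, s < e v
  swap
  · simp only [not_exists, not_lt] at hlate
    simp [layoutBoundary_eq_empty hlate]
  -- every boundary vertex lies in the first bag of `v₀`, the first vertex placed after `s`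
  obtain ⟨v₀, hv₀, hv₀min⟩ := (univ.filter (s < e ·)).exists_min_image e
    (by obtain ⟨v, hv⟩ := hlate; exact ⟨v, by simpa using hv⟩)
  simp only [mem_filter, mem_univ, true_and] at hv₀ hv₀min
  have hsub : G.layoutBoundary e s ⊆ (B (f v₀)).erase v₀ := fun u hu ↦ by
    obtain ⟨hus, x, hux, hx⟩ := mem_layoutBoundary.1 hu
    obtain ⟨j, huj, hxj⟩ := hedge u x hux
    refine mem_erase.2 ⟨by rintro rfl; omega, hconvex u (f u) (f v₀) j ?_ ?_ (hf u) huj⟩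
    · exact Fin.le_def.2 (hef u v₀ (by omega))
    · exact (Fin.le_def.2 (hef v₀ x (hv₀min x hx))).trans (hfmin x j hxj)
  calc #(G.layoutBoundary e s) ≤ #((B (f v₀)).erase v₀) := card_le_card hsub
    _ ≤ w := by rw [card_erase_of_mem (hf v₀)]; have := hw (f v₀); omega

theorem pathwidth_le_of_layout {e : V → ℕ} (he : Injective e) {w : ℕ}
    (hw : ∀ s, #(G.layoutBoundary e s) ≤ w) : pathwidth G ≤ w := by
  have hn : ∀ v, e v < univ.sup e + 1 := fun v ↦ Nat.lt_succ_of_le (le_sup (mem_univ v))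
  exact Nat.sInf_le ⟨_, _, isPathDecomp_layoutBag e hn,
    fun i ↦ (card_layoutBag_le he i).trans (by have := hw (i - 1); omega)⟩

theorem pathwidth_le_iff_exists_layout {w : ℕ} : pathwidth G ≤ w ↔
    ∃ e : V → ℕ, Injective e ∧ ∀ s, #(G.layoutBoundary e s) ≤ w := by
  refine ⟨fun h ↦ ?_, fun ⟨e, he, hw⟩ ↦ pathwidth_le_of_layout he hw⟩
  have hne : {w | ∃ (n : ℕ) (B : Fin n → Finset V),
      IsPathDecomp G n B ∧ ∀ i, #(B i) ≤ w + 1}.Nonempty :=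
    ⟨Fintype.card V, 1, fun _ ↦ univ, ⟨fun _ ↦ ⟨0, mem_univ _⟩,
      fun _ _ _ ↦ ⟨0, mem_univ _, mem_univ _⟩, fun _ _ _ _ _ _ _ _ ↦ mem_univ _⟩,
      fun _ ↦ (card_le_univ _).trans (Nat.le_succ _)⟩
  obtain ⟨n, B, hB, hcard⟩ := Nat.sInf_mem hne
  obtain ⟨e, he, hbd⟩ := exists_layout_of_isPathDecomp hB hcard
  exact ⟨e, he, fun s ↦ (hbd s).trans h⟩

end Layout

namespace Gk

variable {k : ℕ}

theorem coord_bounds (v : GkVert k) :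
    1 ≤ v.1.1 ∧ v.1.1 ≤ k + 2 ∧ 1 ≤ v.1.2 ∧ v.1.2 ≤ 3 * k + 6 := by
  have := v.2
  simp only [mem_product, mem_Icc] at this
  omega

theorem vert_ext_iff {u v : GkVert k} : u = v ↔ u.1.1 = v.1.1 ∧ u.1.2 = v.1.2 := by
  rw [Subtype.ext_iff, Prod.ext_iff]

theorem adj_iff {u v : GkVert k} : (Gk k).Adj u v ↔
    (u.1.2 = v.1.2 ∧ (v.1.1 = u.1.1 + 1 ∨ u.1.1 = v.1.1 + 1)) ∨
    (u.1.1 = v.1.1 ∧ u.1.1 ≤ k ∧ (v.1.2 = u.1.2 + 1 ∨ u.1.2 = v.1.2 + 1)) := by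
  rw [Gk, SimpleGraph.fromRel_adj, Ne, vert_ext_iff]
  omega

-- Clamping the coordinates makes rows and columns chains `ℕ → GkVert k`.
def pt (k x y : ℕ) : GkVert k :=
  ⟨(min (max x 1) (k + 2), min (max y 1) (3 * k + 6)), by simp only [mem_product, mem_Icc]; omega⟩

@[simp] theorem pt_fst (x y : ℕ) : (pt k x y).1.1 = min (max x 1) (k + 2) := rfl
@[simp] theorem pt_snd (x y : ℕ) : (pt k x y).1.2 = min (max y 1) (3 * k + 6) := rfl

theorem pt_eq {v : GkVert k} {x y : ℕ} (hx : v.1.1 = x) (hy : v.1.2 = y) : pt k x y = v := by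
  have := coord_bounds v
  rw [vert_ext_iff, pt_fst, pt_snd]
  omega

def sweep (k : ℕ) (v : GkVert k) : ℕ := (v.1.2 - 1) * (k + 2) + (v.1.1 - 1)

theorem sweep_le_iff {v : GkVert k} {q r : ℕ} (hr : r < k + 2) :
    sweep k v ≤ q * (k + 2) + r ↔ v.1.2 - 1 < q ∨ v.1.2 - 1 = q ∧ v.1.1 - 1 ≤ r :=
  Nat.mul_add_le_mul_add_iff (by have := coord_bounds v; omega) hr

theorem sweep_injective : Injective (sweep k) := fun u v h ↦ by
  have hu := coord_bounds u
  have hv := coord_bounds v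
  have h₁ := (sweep_le_iff (v := u) (show v.1.1 - 1 < k + 2 by omega)).1 h.le
  have h₂ := (sweep_le_iff (v := v) (show u.1.1 - 1 < k + 2 by omega)).1 h.ge
  rw [vert_ext_iff]
  omega

theorem mem_layoutBoundary_sweep {q r : ℕ} (hr : r < k + 2) {u : GkVert k}
    (hu : u ∈ (Gk k).layoutBoundary (sweep k) (q * (k + 2) + r)) :
    (u.1.2 - 1 = q ∧ u.1.1 ≤ r + 1 ∧ (u.1.1 ≤ k ∨ u.1.1 = r + 1)) ∨
      (u.1.2 = q ∧ r + 1 < u.1.1 ∧ u.1.1 ≤ k) := by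
  obtain ⟨hus, w, huw, hws⟩ := mem_layoutBoundary.1 hu
  rw [sweep_le_iff hr] at hus
  rw [← not_le, sweep_le_iff hr] at hws
  have := coord_bounds u
  have := coord_bounds w
  rw [adj_iff] at huw
  omega

theorem card_layoutBoundary_sweep_le (s : ℕ) : #((Gk k).layoutBoundary (sweep k) s) ≤ k + 1 := by
  obtain ⟨q, r, hr, rfl⟩ : ∃ q r, r < k + 2 ∧ s = q * (k + 2) + r :=
    ⟨s / (k + 2), s % (k + 2), Nat.mod_lt _ (by omega), (Nat.div_add_mod' s (k + 2)).symm⟩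
  -- the rows of the boundary vertices are distinct, and rows `k + 1`, `k + 2` do not both occur
  calc #((Gk k).layoutBoundary (sweep k) (q * (k + 2) + r)) ≤ #(range (k + 1)) := by
        refine card_le_card_of_injOn (fun u ↦ min u.1.1 (k + 1) - 1) (fun u _ ↦ ?_)
          (fun u hu v hv huv ↦ ?_)
        · have := coord_bounds u
          simp only [coe_range, Set.mem_Iio]
          omega
        · have := mem_layoutBoundary_sweep hr hu
          have := mem_layoutBoundary_sweep hr hv
          have := coord_bounds u
          have := coord_bounds v
          rw [vert_ext_iff]
          simp only at huv
          omega
    _ = k + 1 := card_range _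

section LowerBound

variable {e : GkVert k → ℕ} {s : ℕ}

theorem exists_mem_layoutBoundary_row {r : ℕ} (hr : r ∈ Icc 1 k)
    (hplaced : ∃ v : GkVert k, v.1.1 = r ∧ e v ≤ s)
    (hunplaced : ∃ v : GkVert k, v.1.1 = r ∧ s < e v) :
    ∃ u ∈ (Gk k).layoutBoundary e s, u.1.1 = r := by
  rw [mem_Icc] at hr
  obtain ⟨a, ha, hea⟩ := hplaced
  obtain ⟨b, hb, heb⟩ := hunplaced
  have := coord_bounds a
  have := coord_bounds b
  obtain ⟨m, -, hm⟩ := exists_mem_layoutBoundary_of_chain (G := Gk k) (e := e) (s := s)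
    (n := 3 * k + 5) (fun m ↦ pt k r (m + 1))
    (fun m hm ↦ by rw [adj_iff]; simp only [pt_fst, pt_snd, true_and]; omega)
    (i := a.1.2 - 1) (j := b.1.2 - 1) (by omega) (by omega)
    (by rwa [pt_eq ha (by omega)]) (by rwa [pt_eq hb (by omega)])
  exact ⟨_, hm, by simp only [pt_fst]; omega⟩

theorem exists_mem_layoutBoundary_col {c : ℕ}
    (hplaced : ∃ v : GkVert k, v.1.2 = c ∧ e v ≤ s)
    (hunplaced : ∃ v : GkVert k, v.1.2 = c ∧ s < e v) :
    ∃ u ∈ (Gk k).layoutBoundary e s, u.1.2 = c := by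
  obtain ⟨a, ha, hea⟩ := hplaced
  obtain ⟨b, hb, heb⟩ := hunplaced
  have := coord_bounds a
  have := coord_bounds b
  obtain ⟨m, -, hm⟩ := exists_mem_layoutBoundary_of_chain (G := Gk k) (e := e) (s := s)
    (n := k + 1) (fun m ↦ pt k (m + 1) c)
    (fun m hm ↦ by rw [adj_iff]; simp only [pt_fst, pt_snd, true_and]; omega)
    (i := a.1.1 - 1) (j := b.1.1 - 1) (by omega) (by omega)
    (by rwa [pt_eq (by omega) ha]) (by rwa [pt_eq (by omega) hb])
  exact ⟨_, hm, by simp only [pt_snd]; omega⟩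

def RowsCut (e : GkVert k → ℕ) (s : ℕ) : Prop :=
  ∀ r ∈ Icc 1 k, (∃ v : GkVert k, v.1.1 = r ∧ e v ≤ s) ∧ ∃ v : GkVert k, v.1.1 = r ∧ s < e v

theorem fst_le_of_mem_layoutBoundary (hbd : #((Gk k).layoutBoundary e s) ≤ k)
    (hcut : RowsCut e s) {u : GkVert k} (hu : u ∈ (Gk k).layoutBoundary e s) : u.1.1 ≤ k := by
  by_contra! hku
  have hrows : Set.SurjOn (fun v : GkVert k ↦ v.1.1) (((Gk k).layoutBoundary e s).erase u)
      (Icc 1 k) := fun r hr ↦ by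
    obtain ⟨v, hv, hvr⟩ := exists_mem_layoutBoundary_row hr (hcut r hr).1 (hcut r hr).2
    rw [mem_coe, mem_Icc] at hr
    exact ⟨v, mem_erase.2 ⟨by rintro rfl; omega, hv⟩, hvr⟩
  have := card_le_card_of_surjOn _ hrows
  rw [Nat.card_Icc, card_erase_of_mem hu] at this
  have := card_pos.2 ⟨u, hu⟩
  omega

theorem ne_succ_of_rowsCut (he : Injective e) (hbd : ∀ s, #((Gk k).layoutBoundary e s) ≤ k)
    (hs : RowsCut e s) (hs' : RowsCut e (s + 1)) {v : GkVert k} (hv : k < v.1.1) :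
    e v ≠ s + 1 := by
  intro hev
  have := coord_bounds v
  -- `w` is the other vertex of the pendant edge below row `k`
  set w := pt k (2 * k + 3 - v.1.1) v.1.2
  have hvw : (Gk k).Adj v w := by rw [adj_iff]; simp only [w, pt_fst, pt_snd]; omega
  have hw : e w ≤ s + 1 := by
    by_contra! h
    have := fst_le_of_mem_layoutBoundary (hbd _) hs' (mem_layoutBoundary.2 ⟨hev.le, w, hvw, h⟩)
    omega
  have hwv : w ≠ v := fun h ↦ by rw [vert_ext_iff] at h; simp only [w, pt_fst] at h; omega
  have hws : e w ≤ s := Nat.le_of_lt_succ (hw.lt_of_ne fun h ↦ hwv (he (h.trans hev.symm)))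
  have := fst_le_of_mem_layoutBoundary (hbd _) hs
    (mem_layoutBoundary.2 ⟨hws, v, hvw.symm, by omega⟩)
  simp only [w, pt_fst] at this
  omega

end LowerBound

theorem exists_lt_card_layoutBoundary (hk : 1 ≤ k) {e : GkVert k → ℕ} (he : Injective e) :
    ∃ s, k < #((Gk k).layoutBoundary e s) := by
  by_contra! hbd
  -- column `c₀` is the first to be completed, at time `t₁`
  obtain ⟨c₀, hc₀, v₁, rfl, hc₀full, hcols⟩ := exists_first_completed he (·.1.2)
    (I := Icc 1 (3 * k + 6)) ⟨1, by simp⟩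
    fun c hc ↦ ⟨pt k 1 c, by rw [mem_Icc] at hc; simp only [pt_snd]; omega⟩
  -- row `r₀` is the first of the rows `1, …, k` to be completed, at time `T`
  obtain ⟨r₀, hr₀, v₂, rfl, hr₀full, hrows⟩ := exists_first_completed he (·.1.1)
    (I := Icc 1 k) ⟨1, by simp [hk]⟩
    fun r hr ↦ ⟨pt k r 1, by rw [mem_Icc] at hr; simp only [pt_fst]; omega⟩
  rw [mem_Icc] at hr₀
  have hv₁ := coord_bounds v₁
  set t₁ := e v₁
  set T := e v₂
  have hcut : ∀ s, t₁ ≤ s → s < T → RowsCut e s := fun s hs hsT r hr ↦ by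
    refine ⟨⟨pt k r v₁.1.2, ?_, (hc₀full _ ?_).trans hs⟩, ?_⟩
    · rw [mem_Icc] at hr; simp only [pt_fst]; omega
    · simp only [pt_snd]; omega
    · rcases eq_or_ne r v₂.1.1 with rfl | hne
      · exact ⟨v₂, rfl, hsT⟩
      · obtain ⟨v, hv, hTv⟩ := hrows r hr hne
        exact ⟨v, hv, hsT.trans hTv⟩
  have hpendant : ∀ v : GkVert k, k < v.1.1 → e v < T → e v ≤ t₁ := fun v hv hvT ↦ by
    by_contra! h
    exact ne_succ_of_rowsCut (s := e v - 1) he hbd (hcut _ (by omega) (by omega))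
      (hcut _ (by omega) (by omega)) hv (by omega)
  -- a column other than `c₀` still open at `T` is cut there, as row `r₀` is full; otherwise its
  -- pendant vertex was placed by `t₁`, so it is cut at `t₁`
  have hcover : Set.SurjOn (fun v : GkVert k ↦ v.1.2)
      ↑((Gk k).layoutBoundary e T ∪ (Gk k).layoutBoundary e t₁)
      ↑((Icc 1 (3 * k + 6)).erase v₁.1.2) := fun c hc ↦ by
    rw [coe_erase, Set.mem_sdiff, mem_coe, mem_Icc, Set.mem_singleton_iff] at hc
    by_cases hcT : ∃ v : GkVert k, v.1.2 = c ∧ T < e v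
    · obtain ⟨u, hu, huc⟩ := exists_mem_layoutBoundary_col
        ⟨pt k v₂.1.1 c, by simp only [pt_snd]; omega,
          hr₀full _ (by simp only [pt_fst]; omega)⟩ hcT
      exact ⟨u, mem_union_left _ hu, huc⟩
    · simp only [not_exists, not_and, not_lt] at hcT
      have hpT : e (pt k (k + 1) c) ≠ T := fun h ↦ by
        have := congrArg (·.1.1) (he h)
        simp only [pt_fst] at this
        omega
      obtain ⟨u, hu, huc⟩ := exists_mem_layoutBoundary_col
        ⟨pt k (k + 1) c, by simp only [pt_snd]; omega,
          hpendant _ (by simp only [pt_fst]; omega)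
            ((hcT _ (by simp only [pt_snd]; omega)).lt_of_ne hpT)⟩
        (hcols c (by rw [mem_Icc]; omega) hc.2)
      exact ⟨u, mem_union_right _ hu, huc⟩
  have hcard := (card_le_card_of_surjOn _ hcover).trans (card_union_le _ _)
  rw [card_erase_of_mem hc₀, Nat.card_Icc] at hcard
  have := hbd T
  have := hbd t₁
  omega

end Gk

theorem stmt3 (k : ℕ) (hk : 1 ≤ k) : pathwidth (Gk k) = k + 1 := by
  refine le_antisymm (pathwidth_le_of_layout Gk.sweep_injective Gk.card_layoutBoundary_sweep_le) ?_
  by_contra! h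
  obtain ⟨e, he, hbd⟩ := pathwidth_le_iff_exists_layout.1 (Nat.le_of_lt_succ h)
  obtain ⟨s, hs⟩ := Gk.exists_lt_card_layoutBoundary hk he
  exact (hbd s).not_gt hs
end

section
/- For every integer k ≥ 1, the node searching number of G_k is at least k + 2, i.e., there is no search strategy for G_k of cost at most k + 1. -/
namespace NodeSearch
section Aux
variable {V : Type*} [DecidableEq V]

lemma mem_foldl_place (l : List V) (init : Finset V) (v : V) (hv : v ∈ l ∨ v ∈ init) :
    v ∈ (l.map Move.place).foldl applyMove init := by
  induction l generalizing init with
  | nil => simpa using hv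
  | cons a t ih =>
      simp only [List.map_cons, List.foldl_cons]
      refine ih (insert a init) ?_
      rcases hv with hv | hv
      · rcases List.mem_cons.mp hv with h | h
        · exact Or.inr (by simp [applyMove, h])
        · exact Or.inl h
      · exact Or.inr (by simp [applyMove, hv])

lemma nextContam_eq_empty (G : SimpleGraph V) (U : Finset V) (Z : Set (Sym2 V))
    (hU : ∀ v, v ∈ U) : nextContam G U Z = ∅ := by
  ext e
  simp only [nextContam, Set.mem_setOf_eq, Set.mem_empty_iff_false, iff_false]
  intro h
  induction h with
  | base e he => exact he.2 (fun v _ => hU v)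
  | step e e' w hw _ _ _ _ ih => exact ih

lemma exists_strategy (G : SimpleGraph V) [Fintype V] [Nonempty V] :
    ∃ ms : List (Move V), IsStrategy G ms := by
  classical
  refine ⟨(Finset.univ.toList (α := V)).map Move.place, ?_⟩
  have hlen : ((Finset.univ.toList (α := V)).map Move.place).length = Fintype.card V := by
    simp
  obtain ⟨m, hm⟩ : ∃ m, ((Finset.univ.toList (α := V)).map Move.place).length = m + 1 :=
    ⟨Fintype.card V - 1, by rw [hlen]; have := Fintype.card_pos (α := V); omega⟩
  unfold IsStrategy
  rw [hm]
  show nextContam G _ _ = ∅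
  apply nextContam_eq_empty
  intro v
  unfold guardsAt
  rw [← hm, List.take_length]
  exact mem_foldl_place _ _ v (Or.inl (by simp))

lemma contam_closed (G : SimpleGraph V) (ms : List (Move V)) (i : ℕ)
    (e e' : Sym2 V) (w : V) (he : e ∈ contamAt G ms i) (hw : w ∉ guardsAt ms i)
    (hwe : w ∈ e) (hwe' : w ∈ e') (hedge : e' ∈ G.edgeSet) : e' ∈ contamAt G ms i := by
  cases i with
  | zero => exact hedge
  | succ n => exact Spread.step e e' w hw hwe hwe' hedge he

lemma contam_persist (G : SimpleGraph V) (ms : List (Move V)) (i : ℕ)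
    (e : Sym2 V) (he : e ∈ contamAt G ms i) (hne : e ∉ contamAt G ms (i + 1)) :
    ∀ v ∈ e, v ∈ guardsAt ms (i + 1) := by
  by_contra hc
  push_neg at hc
  exact hne (Spread.base e ⟨he, fun hall => by
    obtain ⟨v, hv1, hv2⟩ := hc; exact hv2 (hall v hv1)⟩)

lemma card_guards_le (ms : List (Move V)) (i : ℕ) (hi : i ≤ ms.length) :
    (guardsAt ms i).card ≤ cost ms :=
  Finset.le_sup (f := fun i => (guardsAt ms i).card) (Finset.mem_range.mpr (by omega))

end Aux
end NodeSearch
namespace Stmt5Aux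
open NodeSearch

/-- Vertex constructor for `G_k`. -/
def vt (k x y : ℕ) (h : 1 ≤ x ∧ x ≤ k+2 ∧ 1 ≤ y ∧ y ≤ 3*k+6 := by omega) : GkVert k :=
  ⟨(x, y), by simp only [Finset.mem_product, Finset.mem_Icc]; omega⟩

@[simp] lemma vt_val (k x y : ℕ) (h) : (vt k x y h).val = (x, y) := rfl

lemma vt_inj {k x y x' y' : ℕ} {h h'} (he : vt k x y h = vt k x' y' h') : x = x' ∧ y = y' := by
  have := congrArg Subtype.val he
  simp only [vt_val, Prod.mk.injEq] at this
  exact this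

lemma adj_x (k x y : ℕ) (h1 : 1 ≤ x) (h2 : x ≤ k+1) (h3 : 1 ≤ y) (h4 : y ≤ 3*k+6) :
    (Gk k).Adj (vt k x y) (vt k (x+1) y) := by
  rw [Gk, SimpleGraph.fromRel_adj]
  refine ⟨fun hc => by exact absurd (vt_inj hc).1 (by omega), ?_⟩
  exact Or.inl (Or.inl ⟨rfl, rfl⟩)

lemma adj_y (k x y : ℕ) (h1 : 1 ≤ x) (h2 : x ≤ k) (h3 : 1 ≤ y) (h4 : y + 1 ≤ 3*k+6) :
    (Gk k).Adj (vt k x y) (vt k x (y+1)) := by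
  rw [Gk, SimpleGraph.fromRel_adj]
  refine ⟨fun hc => by exact absurd (vt_inj hc).2 (by omega), ?_⟩
  exact Or.inl (Or.inr ⟨rfl, h2, rfl⟩)

end Stmt5Aux
namespace Stmt5Aux
open NodeSearch

section chain
variable {k : ℕ} {U : Finset (GkVert k)} {D : Set (Sym2 (GkVert k))}
  (hcl : ∀ e e' : Sym2 (GkVert k), ∀ w : GkVert k,
      e ∈ D → w ∉ U → w ∈ e → w ∈ e' → e' ∈ (Gk k).edgeSet → e' ∈ D)

include hcl

/-- Spreading along a guard-free row, both directions. -/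
lemma row_reach (y : ℕ) (h3 : 1 ≤ y) (h4 : y ≤ 3*k+6)
    (hrow : ∀ v ∈ U, (v : GkVert k).val.2 ≠ y) :
    ∀ d x (hx : x + d = k + 1) (h1 : 1 ≤ x),
      ((s(vt k (k+1) y, vt k (k+2) y) ∈ D → s(vt k x y, vt k (x+1) y) ∈ D) ∧
       (s(vt k x y, vt k (x+1) y) ∈ D → s(vt k (k+1) y, vt k (k+2) y) ∈ D)) := by
  intro d
  induction d with
  | zero =>
      intro x hx h1
      have hx' : x = k + 1 := by omega
      subst hx'
      exact ⟨fun h => h, fun h => h⟩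
  | succ n ih =>
      intro x hx h1
      have hxk : x ≤ k := by omega
      have ih' := ih (x+1) (by omega) (by omega)
      have hwnot : vt k (x+1) y ∉ U := fun hmem => hrow _ hmem rfl
      constructor
      · intro htip
        refine hcl s(vt k (x+1) y, vt k (x+2) y) s(vt k x y, vt k (x+1) y) (vt k (x+1) y)
          (ih'.1 htip) hwnot (Sym2.mem_mk_left _ _) (Sym2.mem_mk_right _ _) ?_
        exact (Gk k).mem_edgeSet.mpr (adj_x k x y h1 (by omega) h3 h4)
      · intro hlow
        refine ih'.2 (hcl s(vt k x y, vt k (x+1) y) s(vt k (x+1) y, vt k (x+2) y) (vt k (x+1) y)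
          hlow hwnot (Sym2.mem_mk_right _ _) (Sym2.mem_mk_left _ _) ?_)
        exact (Gk k).mem_edgeSet.mpr (adj_x k (x+1) y (by omega) (by omega) h3 h4)

/-- Spreading along a guard-free column, both directions. -/
lemma col_reach (x : ℕ) (h1 : 1 ≤ x) (h2 : x ≤ k)
    (hcol : ∀ v ∈ U, (v : GkVert k).val.1 ≠ x) :
    ∀ d a (ha : 1 ≤ a) (hab : a + d ≤ 3*k+6),
      (s(vt k x a, vt k (x+1) a) ∈ D ↔ s(vt k x (a+d), vt k (x+1) (a+d)) ∈ D) := by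
  intro d
  induction d with
  | zero => intro a _ _; rfl
  | succ n ih =>
      intro a ha hab
      have hb : a + n ≤ 3*k+6 := by omega
      refine (ih a ha hb).trans ?_
      set b := a + n with hbdef
      have hb1 : 1 ≤ b := by omega
      have hb2 : b + 1 ≤ 3*k+6 := by omega
      have hw1 : vt k x b ∉ U := fun hmem => hcol _ hmem rfl
      have hw2 : vt k x (b+1) ∉ U := fun hmem => hcol _ hmem rfl
      have hyedge : s(vt k x b, vt k x (b+1)) ∈ (Gk k).edgeSet :=
        (Gk k).mem_edgeSet.mpr (adj_y k x b h1 h2 hb1 hb2)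
      have hxb : s(vt k x b, vt k (x+1) b) ∈ (Gk k).edgeSet :=
        (Gk k).mem_edgeSet.mpr (adj_x k x b h1 (by omega) hb1 (by omega))
      have hxb1 : s(vt k x (b+1), vt k (x+1) (b+1)) ∈ (Gk k).edgeSet :=
        (Gk k).mem_edgeSet.mpr (adj_x k x (b+1) h1 (by omega) (by omega) hb2)
      constructor
      · intro h
        have hmid : s(vt k x b, vt k x (b+1)) ∈ D :=
          hcl _ _ (vt k x b) h hw1 (Sym2.mem_mk_left _ _) (Sym2.mem_mk_left _ _) hyedge
        exact hcl _ _ (vt k x (b+1)) hmid hw2 (Sym2.mem_mk_right _ _)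
          (Sym2.mem_mk_left _ _) hxb1
      · intro h
        have hmid : s(vt k x b, vt k x (b+1)) ∈ D :=
          hcl _ _ (vt k x (b+1)) h hw2 (Sym2.mem_mk_left _ _) (Sym2.mem_mk_right _ _) hyedge
        exact hcl _ _ (vt k x b) hmid hw1 (Sym2.mem_mk_left _ _)
          (Sym2.mem_mk_left _ _) hxb

/-- The key separation contradiction: a guard-free path from a dirty tip to a clean tip. -/
lemma no_sep (hk : 1 ≤ k) (c d : ℕ) (hc1 : 1 ≤ c) (hc2 : c ≤ 3*k+6)
    (hd1 : 1 ≤ d) (hd2 : d ≤ 3*k+6)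
    (hrowc : ∀ v ∈ U, (v : GkVert k).val.2 ≠ c)
    (hrowd : ∀ v ∈ U, (v : GkVert k).val.2 ≠ d)
    (x1 : ℕ) (hx1 : 1 ≤ x1) (hx2 : x1 ≤ k)
    (hcol : ∀ v ∈ U, (v : GkVert k).val.1 ≠ x1)
    (htipd : s(vt k (k+1) d, vt k (k+2) d) ∈ D)
    (htipc : s(vt k (k+1) c, vt k (k+2) c) ∉ D) : False := by
  have hxd : s(vt k x1 d, vt k (x1+1) d) ∈ D :=
    (row_reach hcl d hd1 hd2 hrowd (k+1-x1) x1 (by omega) hx1).1 htipd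
  have hxc : s(vt k x1 c, vt k (x1+1) c) ∈ D := by
    rcases le_total c d with hcd | hdc
    · obtain ⟨e, rfl⟩ : ∃ e, d = c + e := ⟨d - c, by omega⟩
      exact (col_reach hcl x1 hx1 hx2 hcol e c hc1 (by omega)).mpr hxd
    · obtain ⟨e, rfl⟩ : ∃ e, c = d + e := ⟨c - d, by omega⟩
      exact (col_reach hcl x1 hx1 hx2 hcol e d hd1 (by omega)).mp hxd
  exact htipc ((row_reach hcl c hc1 hc2 hrowc (k+1-x1) x1 (by omega) hx1).2 hxc)

end chain
end Stmt5Aux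
namespace Stmt5Aux
open NodeSearch

abbrev RowIdx (k : ℕ) := {y : ℕ // y ∈ Finset.Icc 1 (3*k+6)}

lemma rowIdx_bounds {k : ℕ} (y : RowIdx k) : 1 ≤ y.1 ∧ y.1 ≤ 3*k+6 :=
  Finset.mem_Icc.mp y.2

/-- The pendant "tip" edge of row `y`. -/
def tipe (k : ℕ) (y : RowIdx k) : Sym2 (GkVert k) :=
  s(vt k (k+1) y.1 (by have := rowIdx_bounds y; omega),
    vt k (k+2) y.1 (by have := rowIdx_bounds y; omega))

lemma tipe_edge (k : ℕ) (y : RowIdx k) : tipe k y ∈ (Gk k).edgeSet := by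
  have hb := rowIdx_bounds y
  exact (Gk k).mem_edgeSet.mpr (adj_x k (k+1) y.1 (by omega) (by omega) hb.1 hb.2)

lemma main (k : ℕ) (hk : 1 ≤ k) (ms : List (Move (GkVert k)))
    (hstrat : IsStrategy (Gk k) ms) (hcost : cost ms ≤ k + 1) : False := by
  classical
  set N := ms.length with hN
  set D : ℕ → Set (Sym2 (GkVert k)) := fun i => contamAt (Gk k) ms i with hD
  set S : ℕ → Finset (RowIdx k) :=
    (fun i => Finset.univ.filter (fun y => tipe k y ∈ D i)) with hS
  have hcardUniv : (Finset.univ : Finset (RowIdx k)).card = 3*k+6 := by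
    simp [Nat.card_Icc]
  have hS0 : (S 0).card = 3*k+6 := by
    have h0 : S 0 = Finset.univ := by
      refine Finset.filter_true_of_mem ?_
      intro y _
      exact tipe_edge k y
    rw [h0, hcardUniv]
  have hSN : (S N).card = 0 := by
    have h0 : S N = ∅ := by
      refine Finset.filter_false_of_mem ?_
      intro y _
      show tipe k y ∉ contamAt (Gk k) ms N
      rw [hN, show contamAt (Gk k) ms ms.length = ∅ from hstrat]
      simp
    rw [h0, Finset.card_empty]
  -- the first time at most 2k+3 tips are contaminated
  have hex : ∃ i, (S i).card ≤ 2*k+3 := ⟨N, by omega⟩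
  set t := Nat.find hex with htdef
  have ht : (S t).card ≤ 2*k+3 := Nat.find_spec hex
  have htN : t ≤ N := Nat.find_le (by omega)
  have ht0 : t ≠ 0 := by
    intro h
    rw [h] at ht
    omega
  set j := t - 1 with hjdef
  have hjt : j + 1 = t := by omega
  have hfj : ¬ (S j).card ≤ 2*k+3 := Nat.find_min hex (by omega)
  set U := guardsAt ms t with hU
  have hUcard : U.card ≤ k + 1 :=
    le_trans (card_guards_le ms t htN) hcost
  -- tips leaving contamination between times j and t are fully guarded at time t
  have key : ∀ y : RowIdx k, y ∈ S j → y ∉ S t →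
      (vt k (k+1) y.1 (by have := rowIdx_bounds y; omega) ∈ U ∧
       vt k (k+2) y.1 (by have := rowIdx_bounds y; omega) ∈ U) := by
    intro y hyj hyt
    have h1 : tipe k y ∈ D j := by
      exact (Finset.mem_filter.mp hyj).2
    have h2 : tipe k y ∉ D t := by
      intro hc
      exact hyt (Finset.mem_filter.mpr ⟨Finset.mem_univ _, hc⟩)
    have hall : ∀ v ∈ tipe k y, v ∈ guardsAt ms (j+1) := by
      refine contam_persist (Gk k) ms j (tipe k y) h1 ?_
      rw [hjt]
      exact h2
    rw [hjt] at hall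
    exact ⟨hall _ (Sym2.mem_mk_left _ _), hall _ (Sym2.mem_mk_right _ _)⟩
  -- cardinality drop bound
  have hdrop : (S j \ S t).card ≤ U.card := by
    refine Finset.card_le_card_of_injOn
      (fun y => vt k (k+1) y.1 (by have := rowIdx_bounds y; omega)) ?_ ?_
    · intro y hy
      have hy' := Finset.mem_sdiff.mp hy
      exact (key y hy'.1 hy'.2).1
    · intro y _ y' _ he
      exact Subtype.ext (vt_inj he).2
  have hSjle : (S j).card ≤ (S j \ S t).card + (S t).card :=
    Finset.card_le_card_sdiff_add_card
  have hStcard : k + 3 ≤ (S t).card := by omega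
  -- a freshly cleaned tip row y0: both pendant guards present
  obtain ⟨y0, hy0j, hy0t⟩ := Finset.not_subset.mp
    (fun hsub : S j ⊆ S t => by have := Finset.card_le_card hsub; omega)
  obtain ⟨hg1, hg2⟩ := key y0 hy0j hy0t
  -- rows containing guards
  set Rows := U.image (fun v => (v : GkVert k).val.2) with hRows
  have hRowsCard : Rows.card ≤ k + 1 := le_trans (Finset.card_image_le) hUcard
  -- a guard-free clean row c
  have hclean : ∃ c : RowIdx k, c ∉ S t ∧ c.1 ∉ Rows := by
    by_contra h
    push_neg at h
    have hsub : (Finset.univ \ S t).image (fun y : RowIdx k => y.1) ⊆ Rows := by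
      intro r hr
      obtain ⟨y, hy, rfl⟩ := Finset.mem_image.mp hr
      exact h y (Finset.mem_sdiff.mp hy).2
    have hinj : ((Finset.univ \ S t).image (fun y : RowIdx k => y.1)).card
        = (Finset.univ \ S t).card :=
      Finset.card_image_of_injective _ Subtype.val_injective
    have hle := Finset.card_le_card hsub
    have hsd : (Finset.univ \ S t).card = 3*k+6 - (S t).card := by
      rw [Finset.card_sdiff_of_subset (Finset.subset_univ _), hcardUniv]
    omega
  obtain ⟨c, hcclean, hcrow⟩ := hclean
  -- a guard-free dirty row d
  have hdirty : ∃ d : RowIdx k, d ∈ S t ∧ d.1 ∉ Rows := by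
    by_contra h
    push_neg at h
    have hsub : (S t).image (fun y : RowIdx k => y.1) ⊆ Rows := by
      intro r hr
      obtain ⟨y, hy, rfl⟩ := Finset.mem_image.mp hr
      exact h y hy
    have hinj : ((S t).image (fun y : RowIdx k => y.1)).card = (S t).card :=
      Finset.card_image_of_injective _ Subtype.val_injective
    have hle := Finset.card_le_card hsub
    omega
  obtain ⟨d, hddirty, hdrow⟩ := hdirty
  -- a guard-free column x1 ∈ {1, …, k}
  have hy0b := rowIdx_bounds y0
  set Pr : Finset (GkVert k) :=
    ({vt k (k+1) y0.1 (by omega), vt k (k+2) y0.1 (by omega)} : Finset (GkVert k)) with hPr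
  set Pfil : Finset (GkVert k) := U.filter (fun v => (v : GkVert k).val.1 ≤ k) with hPfil
  have hpairsub : Pr ⊆ U := by
    intro v hv
    rcases Finset.mem_insert.mp hv with rfl | hv
    · exact hg1
    · rw [Finset.mem_singleton.mp hv]
      exact hg2
  have hpaircard : Pr.card = 2 := by
    rw [hPr, Finset.card_insert_of_notMem, Finset.card_singleton]
    intro hmem
    have := (vt_inj (Finset.mem_singleton.mp hmem)).1
    omega
  have hsub2 : Pfil ⊆ U \ Pr := by
    intro v hv
    have hv' := Finset.mem_filter.mp hv
    refine Finset.mem_sdiff.mpr ⟨hv'.1, ?_⟩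
    intro hmem
    rcases Finset.mem_insert.mp hmem with rfl | hmem
    · have hle : k + 1 ≤ k := hv'.2
      omega
    · have hv2 := Finset.mem_singleton.mp hmem
      rw [hv2] at hv'
      have hle : k + 2 ≤ k := hv'.2
      omega
  have hfle : Pfil.card ≤ U.card - 2 := by
    calc Pfil.card ≤ (U \ Pr).card := Finset.card_le_card hsub2
    _ = U.card - Pr.card := Finset.card_sdiff_of_subset hpairsub
    _ = U.card - 2 := by rw [hpaircard]
  set Fcols := Pfil.image (fun v => (v : GkVert k).val.1) with hFcols
  have hFcolsCard : Fcols.card ≤ k - 1 := by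
    have himg : Fcols.card ≤ Pfil.card := Finset.card_image_le
    omega
  have hx1 : ∃ x1 ∈ Finset.Icc 1 k, x1 ∉ Fcols := by
    have hns : ¬ Finset.Icc 1 k ⊆ Fcols := by
      intro hsub
      have hle := Finset.card_le_card hsub
      rw [Nat.card_Icc] at hle
      omega
    obtain ⟨x1, hx1, hx2⟩ := Finset.not_subset.mp hns
    exact ⟨x1, hx1, hx2⟩
  obtain ⟨x1, hx1mem, hx1free⟩ := hx1
  have hx1b := Finset.mem_Icc.mp hx1mem
  have hcolfree : ∀ v ∈ U, (v : GkVert k).val.1 ≠ x1 := by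
    intro v hv heq
    refine hx1free (Finset.mem_image.mpr ⟨v, ?_, heq⟩)
    rw [hPfil]
    exact Finset.mem_filter.mpr ⟨hv, by omega⟩
  have hrowcfree : ∀ v ∈ U, (v : GkVert k).val.2 ≠ c.1 := by
    intro v hv heq
    exact hcrow (Finset.mem_image.mpr ⟨v, hv, heq⟩)
  have hrowdfree : ∀ v ∈ U, (v : GkVert k).val.2 ≠ d.1 := by
    intro v hv heq
    exact hdrow (Finset.mem_image.mpr ⟨v, hv, heq⟩)
  -- contamination at time t is spread-closed under U
  have hcl : ∀ e e' : Sym2 (GkVert k), ∀ w : GkVert k,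
      e ∈ D t → w ∉ U → w ∈ e → w ∈ e' → e' ∈ (Gk k).edgeSet → e' ∈ D t := by
    intro e e' w he hw hwe hwe' hedge
    exact contam_closed (Gk k) ms t e e' w he hw hwe hwe' hedge
  have hcb := rowIdx_bounds c
  have hdb := rowIdx_bounds d
  have htipd : s(vt k (k+1) d.1 (by omega), vt k (k+2) d.1 (by omega)) ∈ D t :=
    (Finset.mem_filter.mp hddirty).2
  have htipc : s(vt k (k+1) c.1 (by omega), vt k (k+2) c.1 (by omega)) ∉ D t := by
    intro hcon
    exact hcclean (Finset.mem_filter.mpr ⟨Finset.mem_univ _, hcon⟩)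
  exact no_sep hcl hk c.1 d.1 hcb.1 hcb.2 hdb.1 hdb.2 hrowcfree hrowdfree
    x1 hx1b.1 hx1b.2 hcolfree htipd htipc

end Stmt5Aux
theorem stmt5 (k : ℕ) (hk : 1 ≤ k) :
    k + 2 ≤ NodeSearch.ns (Gk k) ∧
      ¬∃ ms : List (NodeSearch.Move (GkVert k)),
        NodeSearch.IsStrategy (Gk k) ms ∧ NodeSearch.cost ms ≤ k + 1 := by
  have hmain := Stmt5Aux.main k hk
  constructor
  · have hne : {c | ∃ ms : List (NodeSearch.Move (GkVert k)),
        NodeSearch.IsStrategy (Gk k) ms ∧ NodeSearch.cost ms = c}.Nonempty := by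
      have hnonempty : Nonempty (GkVert k) := ⟨Stmt5Aux.vt k 1 1 (by omega)⟩
      obtain ⟨ms0, h0⟩ := NodeSearch.exists_strategy (Gk k)
      exact ⟨_, ms0, h0, rfl⟩
    refine le_csInf hne ?_
    rintro c ⟨ms, hms, rfl⟩
    by_contra h
    push_neg at h
    exact hmain ms hms (by omega)
  · rintro ⟨ms, hms, hc⟩
    exact hmain ms hms hc
end

section
/- Let k ≥ 1 and consider a search strategy on G_k in which no recontamination occurs. At any configuration of the strategy, if some row r ∈ {1,…,k} contains both a contaminated edge and a clean edge, then at least one guard is placed on a vertex of row r; likewise, if some column c ∈ {1,…,3k+6} contains both a contaminated edge and a clean edge, then at least one guard is placed on a vertex of column c. -/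
section Aux

open NodeSearch

/-- contamAt is closed under spreading through unguarded vertices. -/
lemma contam_closure {V : Type*} [DecidableEq V] (G : SimpleGraph V)
    (ms : List (NodeSearch.Move V)) (i : ℕ) {e e' : Sym2 V} {w : V}
    (he : e ∈ NodeSearch.contamAt G ms i) (he' : e' ∈ G.edgeSet)
    (hwe : w ∈ e) (hwe' : w ∈ e') (hw : w ∉ NodeSearch.guardsAt ms i) :
    e' ∈ NodeSearch.contamAt G ms i := by
  cases i with
  | zero => exact he'
  | succ n => exact NodeSearch.Spread.step e e' w hw hwe hwe' he' he

/-- Clamped vertex constructor. -/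
def gv (k x y : ℕ) : GkVert k :=
  ⟨(min (max x 1) (k+2), min (max y 1) (3*k+6)), by
    simp only [Finset.mem_product, Finset.mem_Icc]
    omega⟩

lemma gv_val {k x y : ℕ} (hx1 : 1 ≤ x) (hx2 : x ≤ k+2) (hy1 : 1 ≤ y) (hy2 : y ≤ 3*k+6) :
    (gv k x y).val = (x, y) := by
  simp only [gv]
  congr 1 <;> omega

lemma Gk_adj {k : ℕ} {a b : GkVert k} :
    (Gk k).Adj a b ↔ a ≠ b ∧
      (((b.val.1 = a.val.1 + 1 ∧ b.val.2 = a.val.2) ∨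
        (a.val.1 = b.val.1 ∧ a.val.1 ≤ k ∧ b.val.2 = a.val.2 + 1)) ∨
       ((a.val.1 = b.val.1 + 1 ∧ a.val.2 = b.val.2) ∨
        (b.val.1 = a.val.1 ∧ b.val.1 ≤ k ∧ a.val.2 = b.val.2 + 1))) := by
  simp only [Gk, SimpleGraph.fromRel_adj]

end Aux
section Aux2

def rowE (k r y : ℕ) : Sym2 (GkVert k) := s(gv k r y, gv k r (y+1))
def colE (k x c : ℕ) : Sym2 (GkVert k) := s(gv k x c, gv k (x+1) c)

lemma adj_row {k r y : ℕ} (hr1 : 1 ≤ r) (hrk : r ≤ k) (hy1 : 1 ≤ y) (hy2 : y + 1 ≤ 3*k+6) :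
    (Gk k).Adj (gv k r y) (gv k r (y+1)) := by
  have h1 := gv_val (k := k) hr1 (by omega) hy1 (by omega : y ≤ 3*k+6)
  have h2 := gv_val (k := k) hr1 (by omega) (by omega : 1 ≤ y+1) hy2
  rw [Gk_adj]
  constructor
  · intro h
    have := congrArg Subtype.val h
    rw [h1, h2] at this
    simp at this
  · refine Or.inl (Or.inr ?_)
    rw [h1, h2]
    exact ⟨rfl, hrk, rfl⟩

lemma adj_col {k x c : ℕ} (hx1 : 1 ≤ x) (hx2 : x + 1 ≤ k+2) (hc1 : 1 ≤ c) (hc2 : c ≤ 3*k+6) :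
    (Gk k).Adj (gv k x c) (gv k (x+1) c) := by
  have h1 := gv_val (k := k) hx1 (by omega) hc1 hc2
  have h2 := gv_val (k := k) (by omega : 1 ≤ x+1) hx2 hc1 hc2
  rw [Gk_adj]
  constructor
  · intro h
    have := congrArg Subtype.val h
    rw [h1, h2] at this
    simp at this
  · refine Or.inl (Or.inl ?_)
    rw [h1, h2]
    exact ⟨rfl, rfl⟩

lemma rowE_mem {k r y : ℕ} (hr1 : 1 ≤ r) (hrk : r ≤ k) (hy1 : 1 ≤ y) (hy2 : y + 1 ≤ 3*k+6) :
    rowE k r y ∈ (Gk k).edgeSet :=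
  (SimpleGraph.mem_edgeSet _).2 (adj_row hr1 hrk hy1 hy2)

lemma colE_mem {k x c : ℕ} (hx1 : 1 ≤ x) (hx2 : x + 1 ≤ k+2) (hc1 : 1 ≤ c) (hc2 : c ≤ 3*k+6) :
    colE k x c ∈ (Gk k).edgeSet :=
  (SimpleGraph.mem_edgeSet _).2 (adj_col hx1 hx2 hc1 hc2)

/-- bounds from vertex membership -/
lemma vert_bounds {k : ℕ} (a : GkVert k) :
    1 ≤ a.val.1 ∧ a.val.1 ≤ k + 2 ∧ 1 ≤ a.val.2 ∧ a.val.2 ≤ 3*k+6 := by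
  have := a.property
  simp only [Finset.mem_product, Finset.mem_Icc] at this
  omega

/-- an edge with both endpoints in row r is a row edge -/
lemma row_edge_char {k r : ℕ} {e : Sym2 (GkVert k)} (he : e ∈ (Gk k).edgeSet)
    (hrow : ∀ v ∈ e, v.val.1 = r) :
    ∃ y, 1 ≤ y ∧ y + 1 ≤ 3*k+6 ∧ r ≤ k ∧ 1 ≤ r ∧ e = rowE k r y := by
  induction e using Sym2.ind with
  | _ a b =>
    rw [SimpleGraph.mem_edgeSet, Gk_adj] at he
    have ha : a.val.1 = r := hrow a (Sym2.mem_mk_left a b)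
    have hb : b.val.1 = r := hrow b (Sym2.mem_mk_right a b)
    have hba := vert_bounds a
    have hbb := vert_bounds b
    obtain ⟨hne, hrel⟩ := he
    have key : (r ≤ k ∧ b.val.2 = a.val.2 + 1) ∨ (r ≤ k ∧ a.val.2 = b.val.2 + 1) := by
      rcases hrel with (⟨h1, _⟩ | ⟨_, h2, h3⟩) | (⟨h1, _⟩ | ⟨_, h2, h3⟩) <;> omega
    rcases key with ⟨hrk, hy⟩ | ⟨hrk, hy⟩
    · refine ⟨a.val.2, by omega, by omega, hrk, by omega, ?_⟩
      have hea : a = gv k r a.val.2 := by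
        apply Subtype.ext
        rw [gv_val (by omega) (by omega) (by omega) (by omega)]
        exact Prod.ext ha rfl
      have heb : b = gv k r (a.val.2 + 1) := by
        apply Subtype.ext
        rw [gv_val (by omega) (by omega) (by omega) (by omega)]
        exact Prod.ext hb hy
      rw [rowE, ← hea, ← heb]
    · refine ⟨b.val.2, by omega, by omega, hrk, by omega, ?_⟩
      have hea : a = gv k r (b.val.2 + 1) := by
        apply Subtype.ext
        rw [gv_val (by omega) (by omega) (by omega) (by omega)]
        exact Prod.ext ha hy
      have heb : b = gv k r b.val.2 := by
        apply Subtype.ext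
        rw [gv_val (by omega) (by omega) (by omega) (by omega)]
        exact Prod.ext hb rfl
      rw [rowE, ← hea, ← heb, Sym2.eq_swap]

/-- an edge with both endpoints in column c is a column edge -/
lemma col_edge_char {k c : ℕ} {e : Sym2 (GkVert k)} (he : e ∈ (Gk k).edgeSet)
    (hcol : ∀ v ∈ e, v.val.2 = c) :
    ∃ x, 1 ≤ x ∧ x + 1 ≤ k+2 ∧ 1 ≤ c ∧ c ≤ 3*k+6 ∧ e = colE k x c := by
  induction e using Sym2.ind with
  | _ a b =>
    rw [SimpleGraph.mem_edgeSet, Gk_adj] at he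
    have ha : a.val.2 = c := hcol a (Sym2.mem_mk_left a b)
    have hb : b.val.2 = c := hcol b (Sym2.mem_mk_right a b)
    have hba := vert_bounds a
    have hbb := vert_bounds b
    obtain ⟨hne, hrel⟩ := he
    have key : b.val.1 = a.val.1 + 1 ∨ a.val.1 = b.val.1 + 1 := by
      rcases hrel with (⟨h1, _⟩ | ⟨_, h2, h3⟩) | (⟨h1, _⟩ | ⟨_, h2, h3⟩) <;> omega
    rcases key with hx | hx
    · refine ⟨a.val.1, by omega, by omega, by omega, by omega, ?_⟩
      have hea : a = gv k a.val.1 c := by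
        apply Subtype.ext
        rw [gv_val (by omega) (by omega) (by omega) (by omega)]
        exact Prod.ext rfl ha
      have heb : b = gv k (a.val.1 + 1) c := by
        apply Subtype.ext
        rw [gv_val (by omega) (by omega) (by omega) (by omega)]
        exact Prod.ext hx hb
      rw [colE, ← hea, ← heb]
    · refine ⟨b.val.1, by omega, by omega, by omega, by omega, ?_⟩
      have hea : a = gv k (b.val.1 + 1) c := by
        apply Subtype.ext
        rw [gv_val (by omega) (by omega) (by omega) (by omega)]
        exact Prod.ext hx ha
      have heb : b = gv k b.val.1 c := by
        apply Subtype.ext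
        rw [gv_val (by omega) (by omega) (by omega) (by omega)]
        exact Prod.ext rfl hb
      rw [colE, ← hea, ← heb, Sym2.eq_swap]

end Aux2
section Aux3

lemma row_spread {k : ℕ} (ms : List (NodeSearch.Move (GkVert k))) (i : ℕ) {r : ℕ}
    (hr1 : 1 ≤ r) (hrk : r ≤ k)
    (hng : ∀ v ∈ NodeSearch.guardsAt ms i, v.val.1 ≠ r)
    {y0 : ℕ} (hy01 : 1 ≤ y0) (hy02 : y0 + 1 ≤ 3*k+6)
    (hc : rowE k r y0 ∈ NodeSearch.contamAt (Gk k) ms i)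
    {y1 : ℕ} (hy11 : 1 ≤ y1) (hy12 : y1 + 1 ≤ 3*k+6) :
    rowE k r y1 ∈ NodeSearch.contamAt (Gk k) ms i := by
  have hgv : ∀ y, 1 ≤ y → y ≤ 3*k+6 → gv k r y ∉ NodeSearch.guardsAt ms i := by
    intro y h1 h2 hg
    exact hng _ hg (by rw [gv_val (by omega) (by omega) h1 h2])
  have step_up : ∀ y, 1 ≤ y → y + 2 ≤ 3*k+6 →
      rowE k r y ∈ NodeSearch.contamAt (Gk k) ms i →
      rowE k r (y+1) ∈ NodeSearch.contamAt (Gk k) ms i := by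
    intro y h1 h2 hcy
    exact contam_closure (Gk k) ms i hcy (rowE_mem hr1 hrk (by omega) (by omega))
      (Sym2.mem_mk_right _ _) (Sym2.mem_mk_left _ _) (hgv (y+1) (by omega) (by omega))
  have step_down : ∀ y, 1 ≤ y → y + 2 ≤ 3*k+6 →
      rowE k r (y+1) ∈ NodeSearch.contamAt (Gk k) ms i →
      rowE k r y ∈ NodeSearch.contamAt (Gk k) ms i := by
    intro y h1 h2 hcy
    exact contam_closure (Gk k) ms i hcy (rowE_mem hr1 hrk (by omega) (by omega))
      (Sym2.mem_mk_left _ _) (Sym2.mem_mk_right _ _) (hgv (y+1) (by omega) (by omega))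
  have up : ∀ d, y0 + d + 1 ≤ 3*k+6 → rowE k r (y0 + d) ∈ NodeSearch.contamAt (Gk k) ms i := by
    intro d
    induction d with
    | zero => exact fun _ => hc
    | succ n ih => exact fun h => step_up (y0 + n) (by omega) (by omega) (ih (by omega))
  have down : ∀ d, d ≤ y0 - 1 → rowE k r (y0 - d) ∈ NodeSearch.contamAt (Gk k) ms i := by
    intro d
    induction d with
    | zero => exact fun _ => hc
    | succ n ih =>
      intro h
      have e : y0 - (n+1) + 1 = y0 - n := by omega
      exact step_down (y0 - (n+1)) (by omega) (by omega) (by rw [e]; exact ih (by omega))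
  rcases le_total y0 y1 with hle | hle
  · have h := up (y1 - y0) (by omega)
    have e : y0 + (y1 - y0) = y1 := by omega
    rwa [e] at h
  · have h := down (y0 - y1) (by omega)
    have e : y0 - (y0 - y1) = y1 := by omega
    rwa [e] at h

lemma col_spread {k : ℕ} (ms : List (NodeSearch.Move (GkVert k))) (i : ℕ) {c : ℕ}
    (hc1 : 1 ≤ c) (hc2 : c ≤ 3*k+6)
    (hng : ∀ v ∈ NodeSearch.guardsAt ms i, v.val.2 ≠ c)
    {x0 : ℕ} (hx01 : 1 ≤ x0) (hx02 : x0 + 1 ≤ k+2)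
    (hc : colE k x0 c ∈ NodeSearch.contamAt (Gk k) ms i)
    {x1 : ℕ} (hx11 : 1 ≤ x1) (hx12 : x1 + 1 ≤ k+2) :
    colE k x1 c ∈ NodeSearch.contamAt (Gk k) ms i := by
  have hgv : ∀ x, 1 ≤ x → x ≤ k+2 → gv k x c ∉ NodeSearch.guardsAt ms i := by
    intro x h1 h2 hg
    exact hng _ hg (by rw [gv_val h1 h2 hc1 hc2])
  have step_up : ∀ x, 1 ≤ x → x + 2 ≤ k+2 →
      colE k x c ∈ NodeSearch.contamAt (Gk k) ms i →
      colE k (x+1) c ∈ NodeSearch.contamAt (Gk k) ms i := by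
    intro x h1 h2 hcy
    exact contam_closure (Gk k) ms i hcy (colE_mem (by omega) (by omega) hc1 hc2)
      (Sym2.mem_mk_right _ _) (Sym2.mem_mk_left _ _) (hgv (x+1) (by omega) (by omega))
  have step_down : ∀ x, 1 ≤ x → x + 2 ≤ k+2 →
      colE k (x+1) c ∈ NodeSearch.contamAt (Gk k) ms i →
      colE k x c ∈ NodeSearch.contamAt (Gk k) ms i := by
    intro x h1 h2 hcy
    exact contam_closure (Gk k) ms i hcy (colE_mem (by omega) (by omega) hc1 hc2)
      (Sym2.mem_mk_left _ _) (Sym2.mem_mk_right _ _) (hgv (x+1) (by omega) (by omega))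
  have up : ∀ d, x0 + d + 1 ≤ k+2 → colE k (x0 + d) c ∈ NodeSearch.contamAt (Gk k) ms i := by
    intro d
    induction d with
    | zero => exact fun _ => hc
    | succ n ih => exact fun h => step_up (x0 + n) (by omega) (by omega) (ih (by omega))
  have down : ∀ d, d ≤ x0 - 1 → colE k (x0 - d) c ∈ NodeSearch.contamAt (Gk k) ms i := by
    intro d
    induction d with
    | zero => exact fun _ => hc
    | succ n ih =>
      intro h
      have e : x0 - (n+1) + 1 = x0 - n := by omega
      exact step_down (x0 - (n+1)) (by omega) (by omega) (by rw [e]; exact ih (by omega))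
  rcases le_total x0 x1 with hle | hle
  · have h := up (x1 - x0) (by omega)
    have e : x0 + (x1 - x0) = x1 := by omega
    rwa [e] at h
  · have h := down (x0 - x1) (by omega)
    have e : x0 - (x0 - x1) = x1 := by omega
    rwa [e] at h

end Aux3

theorem stmt6 (k : ℕ) (hk : 1 ≤ k) (ms : List (NodeSearch.Move (GkVert k)))
    (hstrat : NodeSearch.IsStrategy (Gk k) ms)
    (hrf : NodeSearch.RecontFree (Gk k) ms)
    (i : ℕ) (hi : i ≤ ms.length) :
    (∀ r, 1 ≤ r → r ≤ k →
      (∃ e ∈ (Gk k).edgeSet, (∀ v ∈ e, v.val.1 = r) ∧ e ∈ NodeSearch.contamAt (Gk k) ms i) →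
      (∃ e ∈ (Gk k).edgeSet, (∀ v ∈ e, v.val.1 = r) ∧ e ∉ NodeSearch.contamAt (Gk k) ms i) →
      ∃ v : GkVert k, v ∈ NodeSearch.guardsAt ms i ∧ v.val.1 = r) ∧
    (∀ c, 1 ≤ c → c ≤ 3 * k + 6 →
      (∃ e ∈ (Gk k).edgeSet, (∀ v ∈ e, v.val.2 = c) ∧ e ∈ NodeSearch.contamAt (Gk k) ms i) →
      (∃ e ∈ (Gk k).edgeSet, (∀ v ∈ e, v.val.2 = c) ∧ e ∉ NodeSearch.contamAt (Gk k) ms i) →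
      ∃ v : GkVert k, v ∈ NodeSearch.guardsAt ms i ∧ v.val.2 = c) := by
  constructor
  · rintro r hr1 hrk ⟨e, heE, heR, heC⟩ ⟨e', he'E, he'R, he'C⟩
    by_contra hg
    push_neg at hg
    obtain ⟨y0, hy01, hy02, _, _, rfl⟩ := row_edge_char heE heR
    obtain ⟨y1, hy11, hy12, _, _, rfl⟩ := row_edge_char he'E he'R
    exact he'C (row_spread ms i hr1 hrk hg hy01 hy02 heC hy11 hy12)
  · rintro c hc1 hc2 ⟨e, heE, heR, heC⟩ ⟨e', he'E, he'R, he'C⟩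
    by_contra hg
    push_neg at hg
    obtain ⟨x0, hx01, hx02, _, _, rfl⟩ := col_edge_char heE heR
    obtain ⟨x1, hx11, hx12, _, _, rfl⟩ := col_edge_char he'E he'R
    exact he'C (col_spread ms i hc1 hc2 hg hx01 hx02 heC hx11 hx12)
end

section
/- Let k ≥ 1 and consider a recontamination-free search strategy on G_k of cost at most k + 1. Then once k+2 columns are clean, each of the rows 1,…,k contains a clean edge. -/
/-- Column `c` of `G_k` is clean after the first `i` moves if all of its column edges
are clean. -/
def CleanColumn (k : ℕ) (ms : List (NodeSearch.Move (GkVert k))) (i : ℕ) (c : ℕ) : Prop :=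
  ∀ e ∈ (Gk k).edgeSet, (∀ v ∈ e, v.val.2 = c) → e ∉ NodeSearch.contamAt (Gk k) ms i

/-- Helper: construct a vertex of `G_k`. -/
def mkVert (k r c : ℕ) (h1 : 1 ≤ r) (h2 : r ≤ k + 2) (h3 : 1 ≤ c) (h4 : c ≤ 3 * k + 6) :
    GkVert k := ⟨(r, c), by
  simp only [Finset.mem_product, Finset.mem_Icc]
  exact ⟨⟨h1, h2⟩, ⟨h3, h4⟩⟩⟩

/-- Adjacency of a column edge in `G_k`. -/
lemma col_adj (k : ℕ) {a b : GkVert k} (h1 : b.val.1 = a.val.1 + 1) (h2 : b.val.2 = a.val.2) :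
    (Gk k).Adj a b := by
  rw [Gk, SimpleGraph.fromRel_adj]
  refine ⟨?_, Or.inl (Or.inl ⟨h1, h2⟩)⟩
  intro h
  rw [h] at h1
  omega

/-- Adjacency of a row edge in `G_k`. -/
lemma row_adj (k : ℕ) {a b : GkVert k} (h1 : a.val.1 = b.val.1) (h2 : a.val.1 ≤ k)
    (h3 : b.val.2 = a.val.2 + 1) : (Gk k).Adj a b := by
  rw [Gk, SimpleGraph.fromRel_adj]
  refine ⟨?_, Or.inl (Or.inr ⟨h1, h2, h3⟩)⟩
  intro h
  rw [h] at h3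
  omega

/-- After at least one move, the contaminated edge set is closed under spreading through
unguarded shared endpoints. -/
lemma contam_closed {V : Type*} [DecidableEq V] (G : SimpleGraph V)
    (ms : List (NodeSearch.Move V)) (j : ℕ) {e e' : Sym2 V} {w : V}
    (he : e ∈ NodeSearch.contamAt G ms (j + 1))
    (hw : w ∉ NodeSearch.guardsAt ms (j + 1)) (hwe : w ∈ e) (hwe' : w ∈ e')
    (he' : e' ∈ G.edgeSet) : e' ∈ NodeSearch.contamAt G ms (j + 1) :=
  NodeSearch.Spread.step e e' w hw hwe hwe' he' he

theorem stmt7 (k : ℕ) (hk : 1 ≤ k) (ms : List (NodeSearch.Move (GkVert k)))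
    (hstrat : NodeSearch.IsStrategy (Gk k) ms)
    (hrf : NodeSearch.RecontFree (Gk k) ms)
    (hcost : NodeSearch.cost ms ≤ k + 1)
    (i : ℕ) (hi : i ≤ ms.length)
    (hcols : k + 2 ≤ {c : ℕ | 1 ≤ c ∧ c ≤ 3 * k + 6 ∧ CleanColumn k ms i c}.ncard) :
    ∀ r, 1 ≤ r → r ≤ k →
      ∃ e ∈ (Gk k).edgeSet, (∀ v ∈ e, v.val.1 = r) ∧ e ∉ NodeSearch.contamAt (Gk k) ms i := by
  intro r hr1 hr2
  by_contra hne
  push_neg at hne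
  -- every row-`r` edge is contaminated at time `i`
  have hrow : ∀ e ∈ (Gk k).edgeSet, (∀ v ∈ e, v.val.1 = r) →
      e ∈ NodeSearch.contamAt (Gk k) ms i := by
    intro e he hv
    exact hne e he hv
  -- the set of clean columns
  set S : Set ℕ := {c : ℕ | 1 ≤ c ∧ c ≤ 3 * k + 6 ∧ CleanColumn k ms i c} with hS
  -- the case `i = 0` is impossible: no column is clean
  obtain ⟨j, rfl⟩ : ∃ j, i = j + 1 := by
    cases i with
    | zero =>
      exfalso
      have hSempty : S = ∅ := by
        ext c
        simp only [hS, Set.mem_setOf_eq, Set.mem_empty_iff_false, iff_false]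
        rintro ⟨hc1, hc2, hcc⟩
        refine hcc s(mkVert k 1 c (by omega) (by omega) hc1 hc2,
            mkVert k 2 c (by omega) (by omega) hc1 hc2) ?_ ?_ ?_
        · exact (Gk k).mem_edgeSet.mpr (col_adj k rfl rfl)
        · intro v hv
          rcases Sym2.mem_iff.mp hv with h | h <;> rw [h] <;> rfl
        · show _ ∈ (Gk k).edgeSet
          exact (Gk k).mem_edgeSet.mpr (col_adj k rfl rfl)
      rw [hSempty] at hcols
      simp at hcols
    | succ j => exact ⟨j, rfl⟩
  -- for each clean column `c`, the vertex `(r, c)` must be guarded at time `j + 1`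
  have key : ∀ c, ∀ hc : c ∈ S,
      mkVert k r c hr1 (by omega) hc.1 hc.2.1 ∈ NodeSearch.guardsAt ms (j + 1) := by
    rintro c ⟨hc1, hc2, hcc⟩
    by_contra hwg
    -- the column edge at `(r, c)` is clean
    set a := mkVert k r c hr1 (by omega) hc1 hc2 with ha
    set b := mkVert k (r + 1) c (by omega) (by omega) hc1 hc2 with hb
    have hcol_edge : s(a, b) ∈ (Gk k).edgeSet := (Gk k).mem_edgeSet.mpr (col_adj k rfl rfl)
    have hclean : s(a, b) ∉ NodeSearch.contamAt (Gk k) ms (j + 1) := by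
      refine hcc s(a, b) hcol_edge ?_
      intro v hv
      rcases Sym2.mem_iff.mp hv with h | h <;> rw [h] <;> rfl
    -- there is a contaminated row edge through `(r, c)`
    have : ∃ f : Sym2 (GkVert k), f ∈ (Gk k).edgeSet ∧ a ∈ f ∧
        f ∈ NodeSearch.contamAt (Gk k) ms (j + 1) := by
      rcases le_or_gt c (3 * k + 5) with hcle | hcgt
      · -- row edge to the right
        set b' := mkVert k r (c + 1) hr1 (by omega) (by omega) (by omega) with hb'
        have hre : (Gk k).Adj a b' := row_adj k rfl hr2 rfl
        refine ⟨s(a, b'), (Gk k).mem_edgeSet.mpr hre, Sym2.mem_mk_left a b', ?_⟩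
        refine hrow _ ((Gk k).mem_edgeSet.mpr hre) ?_
        intro v hv
        rcases Sym2.mem_iff.mp hv with h | h <;> rw [h] <;> rfl
      · -- row edge to the left
        set a' := mkVert k r (c - 1) hr1 (by omega) (by omega) (by omega) with ha'
        have hre : (Gk k).Adj a' a := by
          refine row_adj k rfl hr2 ?_
          show c = (c - 1) + 1
          omega
        refine ⟨s(a', a), (Gk k).mem_edgeSet.mpr hre, Sym2.mem_mk_right a' a, ?_⟩
        refine hrow _ ((Gk k).mem_edgeSet.mpr hre) ?_
        intro v hv
        rcases Sym2.mem_iff.mp hv with h | h <;> rw [h] <;> rfl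
    obtain ⟨f, hf, haf, hfc⟩ := this
    exact hclean (contam_closed (Gk k) ms j hfc hwg haf (Sym2.mem_mk_left a b) hcol_edge)
  -- count: the clean columns inject into the guard set via second coordinates
  have hsub : S ⊆ ↑((NodeSearch.guardsAt ms (j + 1)).image fun v : GkVert k => v.val.2) := by
    intro c hc
    simp only [Finset.coe_image, Set.mem_image, Finset.mem_coe]
    exact ⟨mkVert k r c hr1 (by omega) hc.1 hc.2.1, key c hc, rfl⟩
  have h1 : S.ncard ≤
      ((NodeSearch.guardsAt ms (j + 1)).image fun v : GkVert k => v.val.2).card := by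
    have := Set.ncard_le_ncard hsub (Finset.finite_toSet _)
    rwa [Set.ncard_coe_finset] at this
  have h2 : ((NodeSearch.guardsAt ms (j + 1)).image fun v : GkVert k => v.val.2).card ≤
      (NodeSearch.guardsAt ms (j + 1)).card := Finset.card_image_le
  have h3 : (NodeSearch.guardsAt ms (j + 1)).card ≤ NodeSearch.cost ms := by
    refine Finset.le_sup (f := fun i => (NodeSearch.guardsAt ms i).card) ?_
    exact Finset.mem_range.mpr (by omega)
  omega
end

section
/- For every integer k ≥ 1, the graph W_k contains the graph G_k as a minor. In particular, for x ∈ {1,…,k} and y ∈ {1,…,3k+6}, contracting each vertex set S_{x,y} = { (x,y') : y' ∈ {4k(y−1)+1, …, 4ky} } of W_k into a single vertex yields a graph isomorphic to G_k. -/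
/-- The vertices of the graph `W_k`: the `k` rows `{1, …, k} × {1, …, 4k(3k+6)}`
together with the hair vertices `(k+1, 4ky−2)` and `(k+2, 4ky−1)` for `y ∈ {1, …, 3k+6}`. -/
def WkVerts (k : ℕ) : Finset (ℕ × ℕ) :=
  (Finset.Icc 1 k ×ˢ Finset.Icc 1 (4 * k * (3 * k + 6))) ∪
    (Finset.Icc 1 (3 * k + 6)).image (fun y => (k + 1, 4 * k * y - 2)) ∪
    (Finset.Icc 1 (3 * k + 6)).image (fun y => (k + 2, 4 * k * y - 1))

abbrev WkVert (k : ℕ) : Type := {p : ℕ × ℕ // p ∈ WkVerts k}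

/-- The edge relation of `W_k`: row edges `{(x,y), (x,y+1)}` for `x ∈ {1, …, k}`, and,
for every `y ∈ {1, …, 3k+6}`, the non-row edges
`{(x, 4k(y−1)+4x−3), (x+1, 4k(y−1)+4x−2)}` for `x ∈ {1, …, k−1}` together with the hair
edges `{(k, 4ky−3), (k+1, 4ky−2)}` and `{(k+1, 4ky−2), (k+2, 4ky−1)}`. -/
def WkRel (k : ℕ) (p q : ℕ × ℕ) : Prop :=
  (1 ≤ p.1 ∧ p.1 ≤ k ∧ q.1 = p.1 ∧ q.2 = p.2 + 1) ∨
  (∃ y, 1 ≤ y ∧ y ≤ 3 * k + 6 ∧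
    ((∃ x, 1 ≤ x ∧ x ≤ k - 1 ∧ p = (x, 4 * k * (y - 1) + 4 * x - 3) ∧
        q = (x + 1, 4 * k * (y - 1) + 4 * x - 2)) ∨
      (p = (k, 4 * k * y - 3) ∧ q = (k + 1, 4 * k * y - 2)) ∨
      (p = (k + 1, 4 * k * y - 2) ∧ q = (k + 2, 4 * k * y - 1))))

/-- The graph `W_k`. -/
def Wk (k : ℕ) : SimpleGraph (WkVert k) :=
  SimpleGraph.fromRel fun p q => WkRel k p.val q.val

/-- `H` is a minor of `G`: there are pairwise disjoint nonempty connected branch sets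
`B w ⊆ V(G)`, one for each vertex `w` of `H`, such that every edge of `H` is realized by
an edge of `G` between the corresponding branch sets. -/
def IsMinor {W V : Type*} (H : SimpleGraph W) (G : SimpleGraph V) : Prop :=
  ∃ B : W → Set V,
    (∀ w, (B w).Nonempty) ∧
    (∀ w, (G.induce (B w)).Connected) ∧
    (∀ w w', w ≠ w' → Disjoint (B w) (B w')) ∧
    (∀ w w', H.Adj w w' → ∃ u ∈ B w, ∃ v ∈ B w', G.Adj u v)

/-- The branch sets witnessing that `G_k` is a minor of `W_k`: the vertex `(x, y)` of
`G_k` with `x ≤ k` corresponds to the set `S_{x,y} = {(x, y') : 4k(y−1)+1 ≤ y' ≤ 4ky}`,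
and the vertices `(k+1, y)` and `(k+2, y)` correspond to the hair vertices
`(k+1, 4ky−2)` and `(k+2, 4ky−1)` respectively. -/
def branch (k : ℕ) (v : GkVert k) : Set (WkVert k) :=
  if v.val.1 ≤ k then
    {w | w.val.1 = v.val.1 ∧ 4 * k * (v.val.2 - 1) + 1 ≤ w.val.2 ∧ w.val.2 ≤ 4 * k * v.val.2}
  else if v.val.1 = k + 1 then {w | w.val = (k + 1, 4 * k * v.val.2 - 2)}
  else {w | w.val = (k + 2, 4 * k * v.val.2 - 1)}


section Stmt9Aux

variable {k : ℕ}

lemma pair_fst {a b : ℕ} {p : ℕ × ℕ} (h : p = (a, b)) : p.1 = a := by rw [h]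

lemma pair_snd {a b : ℕ} {p : ℕ × ℕ} (h : p = (a, b)) : p.2 = b := by rw [h]

lemma mul_split (k y : ℕ) (hy : 1 ≤ y) : 4 * k * y = 4 * k * (y - 1) + 4 * k := by
  cases y with
  | zero => omega
  | succ z => simp [Nat.mul_succ]

lemma block_eq (k y1 y2 c : ℕ) (hy1 : 1 ≤ y1) (hy2 : 1 ≤ y2)
    (h1 : 4 * k * (y1 - 1) + 1 ≤ c) (h2 : c ≤ 4 * k * y1)
    (h3 : 4 * k * (y2 - 1) + 1 ≤ c) (h4 : c ≤ 4 * k * y2) : y1 = y2 := by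
  have b1 : y1 - 1 < y2 := Nat.lt_of_mul_lt_mul_left (a := 4 * k) (by omega)
  have b2 : y2 - 1 < y1 := Nat.lt_of_mul_lt_mul_left (a := 4 * k) (by omega)
  omega

lemma block_succ (k y1 y2 c : ℕ) (hk : 1 ≤ k) (hy1 : 1 ≤ y1) (hy2 : 1 ≤ y2) (hne : y1 ≠ y2)
    (h1 : 4 * k * (y1 - 1) + 1 ≤ c) (h2 : c ≤ 4 * k * y1)
    (h3 : 4 * k * (y2 - 1) + 1 ≤ c + 1) (h4 : c + 1 ≤ 4 * k * y2) : y2 = y1 + 1 := by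
  have b1 : y2 - 1 ≤ y1 :=
    Nat.le_of_mul_le_mul_left (show 4 * k * (y2 - 1) ≤ 4 * k * y1 by omega)
      (show 0 < 4 * k by omega)
  have b2 : y1 - 1 < y2 := Nat.lt_of_mul_lt_mul_left (a := 4 * k) (by omega)
  omega

lemma mem_row (k x c : ℕ) (hx1 : 1 ≤ x) (hxk : x ≤ k) (hc1 : 1 ≤ c)
    (hc2 : c ≤ 4 * k * (3 * k + 6)) : (x, c) ∈ WkVerts k := by
  simp only [WkVerts, Finset.mem_union, Finset.mem_product, Finset.mem_Icc]
  exact Or.inl (Or.inl ⟨⟨hx1, hxk⟩, hc1, hc2⟩)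

lemma mem_hair1 (k y : ℕ) (hy1 : 1 ≤ y) (hy2 : y ≤ 3 * k + 6) :
    (k + 1, 4 * k * y - 2) ∈ WkVerts k := by
  simp only [WkVerts, Finset.mem_union, Finset.mem_image, Finset.mem_Icc]
  exact Or.inl (Or.inr ⟨y, ⟨hy1, hy2⟩, rfl⟩)

lemma mem_hair2 (k y : ℕ) (hy1 : 1 ≤ y) (hy2 : y ≤ 3 * k + 6) :
    (k + 2, 4 * k * y - 1) ∈ WkVerts k := by
  simp only [WkVerts, Finset.mem_union, Finset.mem_image, Finset.mem_Icc]
  exact Or.inr ⟨y, ⟨hy1, hy2⟩, rfl⟩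

lemma wk_adj {u v : WkVert k} :
    (Wk k).Adj u v ↔ u ≠ v ∧ (WkRel k u.val v.val ∨ WkRel k v.val u.val) :=
  SimpleGraph.fromRel_adj _ u v

lemma gk_adj {v w : GkVert k} :
    (Gk k).Adj v w ↔ v ≠ w ∧
      (((w.val.1 = v.val.1 + 1 ∧ w.val.2 = v.val.2) ∨
        (v.val.1 = w.val.1 ∧ v.val.1 ≤ k ∧ w.val.2 = v.val.2 + 1)) ∨
       ((v.val.1 = w.val.1 + 1 ∧ v.val.2 = w.val.2) ∨
        (w.val.1 = v.val.1 ∧ w.val.1 ≤ k ∧ v.val.2 = w.val.2 + 1))) :=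
  SimpleGraph.fromRel_adj _ v w

lemma gk_bounds (v : GkVert k) :
    1 ≤ v.val.1 ∧ v.val.1 ≤ k + 2 ∧ 1 ≤ v.val.2 ∧ v.val.2 ≤ 3 * k + 6 := by
  have h := v.2
  simp only [Finset.mem_product, Finset.mem_Icc] at h
  exact ⟨h.1.1, h.1.2, h.2.1, h.2.2⟩

lemma adj_of_rel {u u' : WkVert k} (hne : u.val ≠ u'.val) (h : WkRel k u.val u'.val) :
    (Wk k).Adj u u' :=
  wk_adj.mpr ⟨fun he => hne (by rw [he]), Or.inl h⟩

lemma adj_row_s9 {u v : WkVert k} (hx1 : 1 ≤ u.val.1) (hxk : u.val.1 ≤ k)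
    (h : v.val = (u.val.1, u.val.2 + 1)) : (Wk k).Adj u v := by
  refine adj_of_rel ?_ (Or.inl ⟨hx1, hxk, pair_fst h, pair_snd h⟩)
  intro he
  rw [he] at h
  have := pair_snd h
  omega

lemma branch_cases {v : GkVert k} {u : WkVert k} (hu : u ∈ branch k v) :
    (v.val.1 ≤ k ∧ u.val.1 = v.val.1 ∧
        4 * k * (v.val.2 - 1) + 1 ≤ u.val.2 ∧ u.val.2 ≤ 4 * k * v.val.2) ∨
      (v.val.1 = k + 1 ∧ u.val = (k + 1, 4 * k * v.val.2 - 2)) ∨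
      (¬v.val.1 ≤ k ∧ v.val.1 ≠ k + 1 ∧ u.val = (k + 2, 4 * k * v.val.2 - 1)) := by
  by_cases h1 : v.val.1 ≤ k
  · simp only [branch, if_pos h1] at hu
    exact Or.inl ⟨h1, hu⟩
  · by_cases h2 : v.val.1 = k + 1
    · simp only [branch, if_neg h1, if_pos h2] at hu
      exact Or.inr (Or.inl ⟨h2, hu⟩)
    · simp only [branch, if_neg h1, if_neg h2] at hu
      exact Or.inr (Or.inr ⟨h1, h2, hu⟩)

lemma mem_branch_low {v : GkVert k} {u : WkVert k} (h1 : v.val.1 ≤ k)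
    (h : u.val.1 = v.val.1 ∧ 4 * k * (v.val.2 - 1) + 1 ≤ u.val.2 ∧ u.val.2 ≤ 4 * k * v.val.2) :
    u ∈ branch k v := by
  simp only [branch, if_pos h1]; exact h

lemma mem_branch_mid {v : GkVert k} {u : WkVert k} (hk : 1 ≤ k) (h1 : v.val.1 = k + 1)
    (h : u.val = (k + 1, 4 * k * v.val.2 - 2)) : u ∈ branch k v := by
  simp only [branch, if_neg (show ¬v.val.1 ≤ k by omega), if_pos h1]; exact h

lemma mem_branch_high {v : GkVert k} {u : WkVert k} (hk : 1 ≤ k) (h1 : v.val.1 = k + 2)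
    (h : u.val = (k + 2, 4 * k * v.val.2 - 1)) : u ∈ branch k v := by
  simp only [branch, if_neg (show ¬v.val.1 ≤ k by omega),
    if_neg (show ¬v.val.1 = k + 1 by omega)]
  exact h

lemma reach_left (hk : 1 ≤ k) (x a b : ℕ) (hx1 : 1 ≤ x) (hxk : x ≤ k)
    (ha : 1 ≤ a) (hb : b ≤ 4 * k * (3 * k + 6)) (S : Set (WkVert k))
    (hS : ∀ w, w ∈ S ↔ (w.val.1 = x ∧ a ≤ w.val.2 ∧ w.val.2 ≤ b)) :
    ∀ n (w w0 : WkVert k) (hw : w ∈ S) (hw0 : w0 ∈ S)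
      (_ : w0.val = (x, a)) (_ : w.val.2 = a + n),
      ((Wk k).induce S).Reachable ⟨w, hw⟩ ⟨w0, hw0⟩ := by
  intro n
  induction n with
  | zero =>
    intro w w0 hw hw0 hw0v hn
    obtain ⟨hwx, hwa, hwb⟩ := (hS w).mp hw
    have hww : w = w0 := by
      refine Subtype.ext ?_
      rw [hw0v]
      exact Prod.ext_iff.mpr ⟨hwx, by omega⟩
    subst hww
    exact SimpleGraph.Reachable.refl _
  | succ n ih =>
    intro w w0 hw hw0 hw0v hn
    obtain ⟨hwx, hwa, hwb⟩ := (hS w).mp hw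
    have hmem : (x, a + n) ∈ WkVerts k := mem_row k x (a + n) hx1 hxk (by omega) (by omega)
    have hw' : (⟨(x, a + n), hmem⟩ : WkVert k) ∈ S :=
      (hS _).mpr ⟨rfl, show a ≤ a + n by omega, show a + n ≤ b by omega⟩
    have hadj : (Wk k).Adj (⟨(x, a + n), hmem⟩ : WkVert k) w := by
      refine adj_row_s9 hx1 hxk ?_
      exact Prod.ext_iff.mpr ⟨hwx, show w.val.2 = a + n + 1 by omega⟩
    have hadj2 : ((Wk k).induce S).Adj ⟨w, hw⟩ ⟨⟨(x, a + n), hmem⟩, hw'⟩ := by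
      simpa using hadj.symm
    exact hadj2.reachable.trans (ih _ w0 hw' hw0 hw0v rfl)

lemma interval_connected (hk : 1 ≤ k) (x a b : ℕ) (hx1 : 1 ≤ x) (hxk : x ≤ k)
    (ha : 1 ≤ a) (hab : a ≤ b) (hb : b ≤ 4 * k * (3 * k + 6)) (S : Set (WkVert k))
    (hS : ∀ w, w ∈ S ↔ (w.val.1 = x ∧ a ≤ w.val.2 ∧ w.val.2 ≤ b)) :
    ((Wk k).induce S).Connected := by
  rw [SimpleGraph.connected_iff_exists_forall_reachable]
  have hmem : (x, a) ∈ WkVerts k := mem_row k x a hx1 hxk ha (le_trans hab hb)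
  have hw0 : (⟨(x, a), hmem⟩ : WkVert k) ∈ S :=
    (hS _).mpr ⟨rfl, le_refl a, hab⟩
  refine ⟨⟨⟨(x, a), hmem⟩, hw0⟩, ?_⟩
  rintro ⟨w, hw⟩
  exact (reach_left hk x a b hx1 hxk ha hb S hS (w.val.2 - a) w ⟨(x, a), hmem⟩ hw hw0 rfl
    (by have := ((hS w).mp hw).2.1; omega)).symm

lemma singleton_connected (p : ℕ × ℕ) (hp : p ∈ WkVerts k) (S : Set (WkVert k))
    (hS : ∀ w, w ∈ S ↔ w.val = p) :
    ((Wk k).induce S).Connected := by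
  rw [SimpleGraph.connected_iff_exists_forall_reachable]
  refine ⟨⟨⟨p, hp⟩, (hS _).mpr rfl⟩, ?_⟩
  rintro ⟨w, hw⟩
  have h : (⟨w, hw⟩ : S) = ⟨⟨p, hp⟩, (hS _).mpr rfl⟩ :=
    Subtype.ext (Subtype.ext ((hS w).mp hw))
  rw [h]

lemma branch_connected (hk : 1 ≤ k) (v : GkVert k) :
    ((Wk k).induce (branch k v)).Connected := by
  obtain ⟨h1, h2, h3, h4⟩ := gk_bounds v
  have hsplit := mul_split k v.val.2 h3
  by_cases hx : v.val.1 ≤ k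
  · refine interval_connected hk v.val.1 (4 * k * (v.val.2 - 1) + 1) (4 * k * v.val.2)
      h1 hx (by omega) (by omega) (Nat.mul_le_mul (le_refl (4 * k)) h4) (branch k v) ?_
    intro u
    constructor
    · intro hu
      rcases branch_cases hu with h | h | h
      · exact h.2
      · omega
      · omega
    · exact fun h => mem_branch_low hx h
  · by_cases hx2 : v.val.1 = k + 1
    · refine singleton_connected _ (mem_hair1 k v.val.2 h3 h4) (branch k v) ?_
      intro u
      constructor
      · intro hu
        rcases branch_cases hu with h | h | h
        · omega
        · exact h.2
        · omega
      · exact fun h => mem_branch_mid hk hx2 h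
    · refine singleton_connected _ (mem_hair2 k v.val.2 h3 h4) (branch k v) ?_
      intro u
      constructor
      · intro hu
        rcases branch_cases hu with h | h | h
        · omega
        · omega
        · exact h.2.2
      · exact fun h => mem_branch_high hk (by omega) h
  
lemma branch_nonempty (hk : 1 ≤ k) (v : GkVert k) : (branch k v).Nonempty :=
  Set.nonempty_coe_sort.mp (branch_connected hk v).nonempty

lemma branch_disjoint (hk : 1 ≤ k) (v w : GkVert k) (hvw : v ≠ w) :
    Disjoint (branch k v) (branch k w) := by
  rw [Set.disjoint_left]
  intro u hu hu'
  have hne : v.val ≠ w.val := fun h => hvw (Subtype.ext h)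
  obtain ⟨hv1, hv2, hv3, hv4⟩ := gk_bounds v
  obtain ⟨hw1, hw2, hw3, hw4⟩ := gk_bounds w
  have hsv := mul_split k v.val.2 hv3
  have hsw := mul_split k w.val.2 hw3
  rcases branch_cases hu with ⟨ha1, ha2, ha3, ha4⟩ | ⟨ha1, ha2⟩ | ⟨ha1, ha1', ha2⟩ <;>
    rcases branch_cases hu' with ⟨hb1, hb2, hb3, hb4⟩ | ⟨hb1, hb2⟩ | ⟨hb1, hb1', hb2⟩
  · have hxx : v.val.1 = w.val.1 := by omega
    have hyy : v.val.2 = w.val.2 := block_eq k _ _ u.val.2 hv3 hw3 ha3 ha4 hb3 hb4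
    exact hne (Prod.ext_iff.mpr ⟨hxx, hyy⟩)
  · have := pair_fst hb2; omega
  · have := pair_fst hb2; omega
  · have := pair_fst ha2; omega
  · have h1 := pair_snd ha2
    have h2 := pair_snd hb2
    have h3 : 4 * k * (v.val.2 - 1) = 4 * k * (w.val.2 - 1) := by omega
    have h4 := Nat.eq_of_mul_eq_mul_left (show 0 < 4 * k by omega) h3
    exact hne (Prod.ext_iff.mpr ⟨by omega, by omega⟩)
  · have h1 := pair_fst ha2
    have h2 := pair_fst hb2
    omega
  · have := pair_fst ha2; omega
  · have h1 := pair_fst ha2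
    have h2 := pair_fst hb2
    omega
  · have h1 := pair_snd ha2
    have h2 := pair_snd hb2
    have h3 : 4 * k * (v.val.2 - 1) = 4 * k * (w.val.2 - 1) := by omega
    have h4 := Nat.eq_of_mul_eq_mul_left (show 0 < 4 * k by omega) h3
    exact hne (Prod.ext_iff.mpr ⟨by omega, by omega⟩)

lemma forward_rel (hk : 1 ≤ k) (v w : GkVert k)
    (h : (w.val.1 = v.val.1 + 1 ∧ w.val.2 = v.val.2) ∨
      (v.val.1 = w.val.1 ∧ v.val.1 ≤ k ∧ w.val.2 = v.val.2 + 1)) :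
    ∃ u ∈ branch k v, ∃ u' ∈ branch k w, (Wk k).Adj u u' := by
  obtain ⟨hv1, hv2, hv3, hv4⟩ := gk_bounds v
  obtain ⟨hw1, hw2, hw3, hw4⟩ := gk_bounds w
  have hsv := mul_split k v.val.2 hv3
  have hbndy : 4 * k * v.val.2 ≤ 4 * k * (3 * k + 6) := Nat.mul_le_mul (le_refl (4 * k)) hv4
  rcases h with ⟨hcol1, hcol2⟩ | ⟨hrow1, hrow2, hrow3⟩
  · -- column edge
    have hsw2 : 4 * k * (w.val.2 - 1) = 4 * k * (v.val.2 - 1) := by rw [hcol2]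
    have hsww : 4 * k * w.val.2 = 4 * k * v.val.2 := by rw [hcol2]
    by_cases hc1 : v.val.1 + 1 ≤ k
    · refine ⟨⟨(v.val.1, 4 * k * (v.val.2 - 1) + 4 * v.val.1 - 3),
          mem_row k _ _ hv1 (by omega) (by omega) (by omega)⟩, ?_,
        ⟨(v.val.1 + 1, 4 * k * (v.val.2 - 1) + 4 * v.val.1 - 2),
          mem_row k _ _ (by omega) hc1 (by omega) (by omega)⟩, ?_, ?_⟩
      · refine mem_branch_low (by omega) ⟨rfl, ?_, ?_⟩
        · show 4 * k * (v.val.2 - 1) + 1 ≤ 4 * k * (v.val.2 - 1) + 4 * v.val.1 - 3; omega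
        · show 4 * k * (v.val.2 - 1) + 4 * v.val.1 - 3 ≤ 4 * k * v.val.2; omega
      · refine mem_branch_low (by omega) ⟨?_, ?_, ?_⟩
        · show v.val.1 + 1 = w.val.1; omega
        · show 4 * k * (w.val.2 - 1) + 1 ≤ 4 * k * (v.val.2 - 1) + 4 * v.val.1 - 2; omega
        · show 4 * k * (v.val.2 - 1) + 4 * v.val.1 - 2 ≤ 4 * k * w.val.2; omega
      · refine adj_of_rel ?_
          (Or.inr ⟨v.val.2, hv3, hv4, Or.inl ⟨v.val.1, hv1, by omega, rfl, rfl⟩⟩)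
        intro hcon
        simp only [Prod.mk.injEq] at hcon
        omega
    · by_cases hc2 : v.val.1 = k
      · refine ⟨⟨(k, 4 * k * v.val.2 - 3), mem_row k _ _ hk le_rfl (by omega) (by omega)⟩, ?_,
          ⟨(k + 1, 4 * k * v.val.2 - 2), mem_hair1 k v.val.2 hv3 hv4⟩, ?_, ?_⟩
        · refine mem_branch_low (by omega) ⟨?_, ?_, ?_⟩
          · show k = v.val.1; omega
          · show 4 * k * (v.val.2 - 1) + 1 ≤ 4 * k * v.val.2 - 3; omega
          · show 4 * k * v.val.2 - 3 ≤ 4 * k * v.val.2; omega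
        · refine mem_branch_mid hk (by omega) ?_
          show (k + 1, 4 * k * v.val.2 - 2) = (k + 1, 4 * k * w.val.2 - 2)
          rw [hcol2]
        · refine adj_of_rel ?_
            (Or.inr ⟨v.val.2, hv3, hv4, Or.inr (Or.inl ⟨rfl, rfl⟩)⟩)
          intro hcon
          simp only [Prod.mk.injEq] at hcon
          omega
      · have hc3 : v.val.1 = k + 1 := by omega
        refine ⟨⟨(k + 1, 4 * k * v.val.2 - 2), mem_hair1 k v.val.2 hv3 hv4⟩, ?_,
          ⟨(k + 2, 4 * k * v.val.2 - 1), mem_hair2 k v.val.2 hv3 hv4⟩, ?_, ?_⟩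
        · exact mem_branch_mid hk hc3 rfl
        · refine mem_branch_high hk (by omega) ?_
          show (k + 2, 4 * k * v.val.2 - 1) = (k + 2, 4 * k * w.val.2 - 1)
          rw [hcol2]
        · refine adj_of_rel ?_
            (Or.inr ⟨v.val.2, hv3, hv4, Or.inr (Or.inr ⟨rfl, rfl⟩)⟩)
          intro hcon
          simp only [Prod.mk.injEq] at hcon
          omega
  · -- row edge
    have hsw2 : 4 * k * (w.val.2 - 1) = 4 * k * v.val.2 := by rw [hrow3]; simp
    have hsww := mul_split k w.val.2 hw3
    have hbndw : 4 * k * w.val.2 ≤ 4 * k * (3 * k + 6) := Nat.mul_le_mul (le_refl (4 * k)) hw4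
    refine ⟨⟨(v.val.1, 4 * k * v.val.2), mem_row k _ _ hv1 hrow2 (by omega) (by omega)⟩, ?_,
      ⟨(v.val.1, 4 * k * v.val.2 + 1), mem_row k _ _ hv1 hrow2 (by omega) (by omega)⟩, ?_, ?_⟩
    · refine mem_branch_low hrow2 ⟨rfl, ?_, ?_⟩
      · show 4 * k * (v.val.2 - 1) + 1 ≤ 4 * k * v.val.2; omega
      · show 4 * k * v.val.2 ≤ 4 * k * v.val.2; omega
    · refine mem_branch_low (by omega) ⟨?_, ?_, ?_⟩
      · show v.val.1 = w.val.1; omega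
      · show 4 * k * (w.val.2 - 1) + 1 ≤ 4 * k * v.val.2 + 1; omega
      · show 4 * k * v.val.2 + 1 ≤ 4 * k * w.val.2; omega
    · refine adj_of_rel ?_ (Or.inl ⟨hv1, hrow2, rfl, rfl⟩)
      intro hcon
      simp only [Prod.mk.injEq] at hcon
      omega

lemma backward_rel (hk : 1 ≤ k) (v w : GkVert k) (hne : v.val ≠ w.val) (u u' : WkVert k)
    (hu : u ∈ branch k v) (hu' : u' ∈ branch k w) (hr : WkRel k u.val u'.val) :
    (w.val.1 = v.val.1 + 1 ∧ w.val.2 = v.val.2) ∨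
      (v.val.1 = w.val.1 ∧ v.val.1 ≤ k ∧ w.val.2 = v.val.2 + 1) := by
  obtain ⟨hv1, hv2, hv3, hv4⟩ := gk_bounds v
  obtain ⟨hw1, hw2, hw3, hw4⟩ := gk_bounds w
  have hsv := mul_split k v.val.2 hv3
  have hsw := mul_split k w.val.2 hw3
  rcases hr with ⟨h1, h2, h3, h4⟩ | ⟨y, hy1, hy2, hcase⟩
  · -- row edge
    rcases branch_cases hu with ⟨ha1, ha2, ha3, ha4⟩ | ⟨ha1, ha2⟩ | ⟨ha1, ha1', ha2⟩
    · rcases branch_cases hu' with ⟨hb1, hb2, hb3, hb4⟩ | ⟨hb1, hb2⟩ | ⟨hb1, hb1', hb2⟩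
      · have hyne : v.val.2 ≠ w.val.2 := by
          intro heq
          exact hne (Prod.ext_iff.mpr ⟨by omega, heq⟩)
        refine Or.inr ⟨by omega, by omega, ?_⟩
        exact block_succ k v.val.2 w.val.2 u.val.2 hk hv3 hw3 hyne ha3 ha4
          (by omega) (by omega)
      · have := pair_fst hb2; omega
      · have := pair_fst hb2; omega
    · have := pair_fst ha2; omega
    · have := pair_fst ha2; omega
  · have hsy := mul_split k y hy1
    rcases hcase with ⟨x, hx1, hx2, hp, hq⟩ | ⟨hp, hq⟩ | ⟨hp, hq⟩
    · -- diagonal edge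
      have hux := pair_fst hp
      have huc := pair_snd hp
      have hux' := pair_fst hq
      have huc' := pair_snd hq
      rcases branch_cases hu with ⟨ha1, ha2, ha3, ha4⟩ | ⟨ha1, ha2⟩ | ⟨ha1, ha1', ha2⟩
      · rcases branch_cases hu' with ⟨hb1, hb2, hb3, hb4⟩ | ⟨hb1, hb2⟩ | ⟨hb1, hb1', hb2⟩
        · have hyv : v.val.2 = y :=
            block_eq k v.val.2 y u.val.2 hv3 hy1 ha3 ha4 (by omega) (by omega)
          have hyw : w.val.2 = y :=
            block_eq k w.val.2 y u'.val.2 hw3 hy1 hb3 hb4 (by omega) (by omega)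
          exact Or.inl ⟨by omega, by omega⟩
        · have := pair_fst hb2; omega
        · have := pair_fst hb2; omega
      · have := pair_fst ha2; omega
      · have := pair_fst ha2; omega
    · -- first hair edge
      have hux := pair_fst hp
      have huc := pair_snd hp
      have hux' := pair_fst hq
      have huc' := pair_snd hq
      rcases branch_cases hu with ⟨ha1, ha2, ha3, ha4⟩ | ⟨ha1, ha2⟩ | ⟨ha1, ha1', ha2⟩
      · rcases branch_cases hu' with ⟨hb1, hb2, hb3, hb4⟩ | ⟨hb1, hb2⟩ | ⟨hb1, hb1', hb2⟩
        · have := pair_fst hq; omega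
        · have hyv : v.val.2 = y :=
            block_eq k v.val.2 y u.val.2 hv3 hy1 ha3 ha4 (by omega) (by omega)
          have hb2' := pair_snd hb2
          have h5 : 4 * k * (w.val.2 - 1) = 4 * k * (y - 1) := by omega
          have h6 := Nat.eq_of_mul_eq_mul_left (show 0 < 4 * k by omega) h5
          exact Or.inl ⟨by omega, by omega⟩
        · have := pair_fst hb2; omega
      · have := pair_fst ha2; omega
      · have := pair_fst ha2; omega
    · -- second hair edge
      have hux := pair_fst hp
      have huc := pair_snd hp
      have hux' := pair_fst hq
      have huc' := pair_snd hq
      rcases branch_cases hu with ⟨ha1, ha2, ha3, ha4⟩ | ⟨ha1, ha2⟩ | ⟨ha1, ha1', ha2⟩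
      · omega
      · rcases branch_cases hu' with ⟨hb1, hb2, hb3, hb4⟩ | ⟨hb1, hb2⟩ | ⟨hb1, hb1', hb2⟩
        · omega
        · have := pair_fst hb2; omega
        · have ha2' := pair_snd ha2
          have hb2' := pair_snd hb2
          have h5 : 4 * k * (v.val.2 - 1) = 4 * k * (y - 1) := by omega
          have h6 := Nat.eq_of_mul_eq_mul_left (show 0 < 4 * k by omega) h5
          have h7 : 4 * k * (w.val.2 - 1) = 4 * k * (y - 1) := by omega
          have h8 := Nat.eq_of_mul_eq_mul_left (show 0 < 4 * k by omega) h7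
          exact Or.inl ⟨by omega, by omega⟩
      · have := pair_fst ha2; omega

end Stmt9Aux

theorem stmt9 (k : ℕ) (hk : 1 ≤ k) :
    IsMinor (Gk k) (Wk k) ∧
      (∀ v, (branch k v).Nonempty) ∧
      (∀ v, ((Wk k).induce (branch k v)).Connected) ∧
      (∀ v w, v ≠ w → Disjoint (branch k v) (branch k w)) ∧
      (∀ v w : GkVert k, v ≠ w →
        ((Gk k).Adj v w ↔ ∃ u ∈ branch k v, ∃ u' ∈ branch k w, (Wk k).Adj u u')) := by
  have hconn := branch_connected hk
  have hnonempty := branch_nonempty hk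
  have hdisj := branch_disjoint hk
  have hiff : ∀ v w : GkVert k, v ≠ w →
      ((Gk k).Adj v w ↔ ∃ u ∈ branch k v, ∃ u' ∈ branch k w, (Wk k).Adj u u') := by
    intro v w hvw
    constructor
    · intro h
      rcases (gk_adj.mp h).2 with h' | h'
      · exact forward_rel hk v w h'
      · obtain ⟨u, hu, u', hu', hadj⟩ := forward_rel hk w v h'
        exact ⟨u', hu', u, hu, hadj.symm⟩
    · rintro ⟨u, hu, u', hu', hadj⟩
      rw [gk_adj]
      refine ⟨hvw, ?_⟩
      rcases (wk_adj.mp hadj).2 with hr | hr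
      · exact Or.inl (backward_rel hk v w (fun h => hvw (Subtype.ext h)) u u' hu hu' hr)
      · exact Or.inr (backward_rel hk w v
          (fun h => hvw (Subtype.ext h.symm)) u' u hu' hu hr)
  refine ⟨⟨branch k, hnonempty, hconn, hdisj, ?_⟩, hnonempty, hconn, hdisj, hiff⟩
  intro v w hadj
  exact (hiff v w hadj.ne).mp hadj
end

section
/- For every integer k ≥ 1, W_k is a 2-layer k-planar graph: the drawing π = (π₁, π₂) obtained by placing V₁ = {(x,y) ∈ V(W_k) : y odd} and V₂ = V(W_k) ∖ V₁ on the two layers, each sorted lexicographically by key (y,x), is a 2-layer k-planar drawing of W_k. -/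
/-- The vertices `(x, y)` of `W_k` with `y` odd. -/
def V1 (k : ℕ) : Finset (WkVert k) :=
  (WkVerts k).attach.filter fun p => p.val.2 % 2 = 1

/-- The vertices `(x, y)` of `W_k` with `y` even. -/
def V2 (k : ℕ) : Finset (WkVert k) :=
  (WkVerts k).attach.filter fun p => p.val.2 % 2 = 0

/-- A 2-layer drawing of a bipartite graph `G` with bipartition `(X, Y)`:
the vertices of `X` (resp. `Y`) are placed at positions `1, …, |X|` (resp. `1, …, |Y|`)
on two parallel lines, i.e. `pos` restricts to bijections `X → {1, …, |X|}` and
`Y → {1, …, |Y|}`. -/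
structure TwoLayerDrawing {V : Type*} (G : SimpleGraph V) (X Y : Finset V) where
  pos : V → ℕ
  cover : ∀ v : V, v ∈ X ∨ v ∈ Y
  disj : ∀ v : V, ¬(v ∈ X ∧ v ∈ Y)
  bipart : ∀ u v : V, G.Adj u v → ((u ∈ X ∧ v ∈ Y) ∨ (u ∈ Y ∧ v ∈ X))
  bijX : Set.BijOn pos ↑X (Set.Icc 1 X.card)
  bijY : Set.BijOn pos ↑Y (Set.Icc 1 Y.card)

/-- Two edges `{x₁, y₁}` and `{x₂, y₂}` with `x₁, x₂ ∈ X`, `y₁, y₂ ∈ Y` cross in the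
drawing iff one has its `X`-endpoint to the left of the other's but its `Y`-endpoint
to the right. -/
def TwoLayerDrawing.Crosses {V : Type*} {G : SimpleGraph V} {X Y : Finset V}
    (D : TwoLayerDrawing G X Y) (e₁ e₂ : Sym2 V) : Prop :=
  ∃ x₁ y₁ x₂ y₂ : V, x₁ ∈ X ∧ x₂ ∈ X ∧ y₁ ∈ Y ∧ y₂ ∈ Y ∧
    e₁ = s(x₁, y₁) ∧ e₂ = s(x₂, y₂) ∧
    ((D.pos x₁ < D.pos x₂ ∧ D.pos y₂ < D.pos y₁) ∨
      (D.pos x₂ < D.pos x₁ ∧ D.pos y₁ < D.pos y₂))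

/-- A 2-layer drawing is `k`-planar if every edge crosses at most `k` other edges. -/
def TwoLayerDrawing.IsKPlanar {V : Type*} {G : SimpleGraph V} {X Y : Finset V}
    (D : TwoLayerDrawing G X Y) (k : ℕ) : Prop :=
  ∀ e ∈ G.edgeSet, {e' | e' ∈ G.edgeSet ∧ D.Crosses e e'}.ncard ≤ k

/-- `G` is a 2-layer `k`-planar graph if it admits a 2-layer `k`-planar drawing with
respect to some bipartition. -/
def IsTwoLayerKPlanar {V : Type*} (G : SimpleGraph V) (k : ℕ) : Prop :=
  ∃ (X Y : Finset V) (D : TwoLayerDrawing G X Y), D.IsKPlanar k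

/-- The drawing `π = (π₁, π₂)` of `W_k` sorts each layer lexicographically by
the key `(y, x)`. -/
def LexSorted {k : ℕ} (D : TwoLayerDrawing (Wk k) (V1 k) (V2 k)) : Prop :=
  ∀ u v : WkVert k, ((u ∈ V1 k ∧ v ∈ V1 k) ∨ (u ∈ V2 k ∧ v ∈ V2 k)) →
    (D.pos u < D.pos v ↔ (u.val.2 < v.val.2 ∨ (u.val.2 = v.val.2 ∧ u.val.1 < v.val.1)))

/- ===== auxiliary development ===== -/

section RankAux
variable {α : Type*} [DecidableEq α] {key : α → ℕ}

/-- position of `v` within finset `s`, ranking by `key`. -/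
def posIn (key : α → ℕ) (s : Finset α) (v : α) : ℕ :=
  1 + (s.filter (fun w => key w < key v)).card

lemma posIn_lt_posIn {s : Finset α} {u v : α} (hu : u ∈ s) (h : key u < key v) :
    posIn key s u < posIn key s v := by
  have hss : s.filter (fun w => key w < key u) ⊂ s.filter (fun w => key w < key v) := by
    constructor
    · intro w hw
      simp only [Finset.mem_filter] at hw ⊢
      exact ⟨hw.1, hw.2.trans h⟩
    · intro hsub
      have := hsub (Finset.mem_filter.2 ⟨hu, h⟩)
      simp only [Finset.mem_filter] at this
      omega
  have := Finset.card_lt_card hss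
  unfold posIn; omega

lemma posIn_lt_iff {s : Finset α} {u v : α} (hu : u ∈ s) (hv : v ∈ s)
    (hinj : ∀ a ∈ s, ∀ b ∈ s, key a = key b → a = b) :
    posIn key s u < posIn key s v ↔ key u < key v := by
  constructor
  · intro h
    rcases lt_trichotomy (key u) (key v) with h' | h' | h'
    · exact h'
    · exact absurd (hinj u hu v hv h' ▸ h) (lt_irrefl _)
    · exact absurd (posIn_lt_posIn hv h') (by omega)
  · exact posIn_lt_posIn hu

lemma posIn_mem {s : Finset α} {v : α} (hv : v ∈ s) :
    posIn key s v ∈ Set.Icc 1 s.card := by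
  constructor
  · unfold posIn; omega
  · have hsub : s.filter (fun w => key w < key v) ⊆ s.erase v := by
      intro w hw
      simp only [Finset.mem_filter] at hw
      exact Finset.mem_erase.2 ⟨fun hwv => by subst hwv; omega, hw.1⟩
    have h1 := Finset.card_le_card hsub
    have h2 : (s.erase v).card = s.card - 1 := Finset.card_erase_of_mem hv
    have h3 : 1 ≤ s.card := Finset.card_pos.2 ⟨v, hv⟩
    unfold posIn; omega

lemma posIn_bijOn {s : Finset α}
    (hinj : ∀ a ∈ s, ∀ b ∈ s, key a = key b → a = b) :
    Set.BijOn (posIn key s) ↑s (Set.Icc 1 s.card) := by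
  have hmapsto : ∀ a ∈ s, posIn key s a ∈ Finset.Icc 1 s.card := by
    intro a ha
    have := posIn_mem (key := key) ha
    simpa [Finset.mem_Icc] using this
  have hinj' : ∀ a ∈ s, ∀ b ∈ s, posIn key s a = posIn key s b → a = b := by
    intro a ha b hb hab
    rcases lt_trichotomy (key a) (key b) with h | h | h
    · exact absurd (posIn_lt_posIn ha h) (by omega)
    · exact hinj a ha b hb h
    · exact absurd (posIn_lt_posIn hb h) (by omega)
  refine ⟨fun a ha => posIn_mem (by exact_mod_cast ha), ?_, ?_⟩
  · intro a ha b hb hab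
    exact hinj' a (by exact_mod_cast ha) b (by exact_mod_cast hb) hab
  · have hsurj := Finset.surj_on_of_inj_on_of_card_le (s := s) (t := Finset.Icc 1 s.card)
      (fun a _ => posIn key s a) (fun a ha => hmapsto a ha)
      (fun a b ha hb hab => hinj' a ha b hb hab) (by simp)
    intro b hb
    simp only [Set.mem_Icc] at hb
    obtain ⟨a, ha, hab⟩ := hsurj b (Finset.mem_Icc.2 hb)
    exact ⟨a, by exact_mod_cast ha, hab.symm⟩
end RankAux

section WkAux
variable {k : ℕ}

lemma four_le_mul (hk : 1 ≤ k) {y : ℕ} (hy : 1 ≤ y) : 4 ≤ 4 * k * y := by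
  have h : 4 * 1 * 1 ≤ 4 * k * y := Nat.mul_le_mul (Nat.mul_le_mul (le_refl 4) hk) hy
  omega

lemma vert_bounds_s10 (hk : 1 ≤ k) (v : WkVert k) :
    1 ≤ v.val.1 ∧ v.val.1 ≤ k + 2 ∧ 1 ≤ v.val.2 := by
  have hv := v.property
  simp only [WkVerts, Finset.mem_union, Finset.mem_product, Finset.mem_image,
    Finset.mem_Icc] at hv
  rcases hv with (⟨⟨h1, h2⟩, h3, h4⟩ | ⟨y, ⟨hy1, hy2⟩, hv⟩) | ⟨y, ⟨hy1, hy2⟩, hv⟩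
  · omega
  · have := four_le_mul hk hy1
    rw [← hv]; simp; omega
  · have := four_le_mul hk hy1
    rw [← hv]; simp; omega

/-- key: lexicographic by (column, row). -/
def keyN (k : ℕ) (v : WkVert k) : ℕ := v.val.1 + v.val.2 * (k + 3)

lemma key_lt_iff (hk : 1 ≤ k) (u v : WkVert k) :
    keyN k u < keyN k v ↔ (u.val.2 < v.val.2 ∨ (u.val.2 = v.val.2 ∧ u.val.1 < v.val.1)) := by
  obtain ⟨hu1, hu2, _⟩ := vert_bounds_s10 hk u
  obtain ⟨hv1, hv2, _⟩ := vert_bounds_s10 hk v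
  unfold keyN
  rcases lt_trichotomy u.val.2 v.val.2 with h | h | h
  · have h2 : u.val.2 * (k+3) + (k+3) ≤ v.val.2 * (k+3) := by
      calc u.val.2 * (k+3) + (k+3) = (u.val.2 + 1) * (k+3) := by ring
      _ ≤ v.val.2 * (k+3) := Nat.mul_le_mul_right _ h
    constructor <;> intro <;> omega
  · rw [h]; omega
  · have h2 : v.val.2 * (k+3) + (k+3) ≤ u.val.2 * (k+3) := by
      calc v.val.2 * (k+3) + (k+3) = (v.val.2 + 1) * (k+3) := by ring
      _ ≤ u.val.2 * (k+3) := Nat.mul_le_mul_right _ h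
    constructor <;> intro <;> omega

lemma key_inj (hk : 1 ≤ k) {u v : WkVert k} (h : keyN k u = keyN k v) : u = v := by
  obtain ⟨hu1, hu2, _⟩ := vert_bounds_s10 hk u
  obtain ⟨hv1, hv2, _⟩ := vert_bounds_s10 hk v
  have h1 : ¬ (keyN k u < keyN k v) := by omega
  have h2 : ¬ (keyN k v < keyN k u) := by omega
  rw [key_lt_iff hk] at h1 h2
  have h3 : u.val.1 = v.val.1 ∧ u.val.2 = v.val.2 := by omega
  exact Subtype.ext (Prod.ext h3.1 h3.2)

lemma mem_V1_iff {v : WkVert k} : v ∈ V1 k ↔ v.val.2 % 2 = 1 := by simp [V1]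
lemma mem_V2_iff {v : WkVert k} : v ∈ V2 k ↔ v.val.2 % 2 = 0 := by simp [V2]

/-- basic shape facts about the relation -/
lemma WkRel_facts (hk : 1 ≤ k) {p q : ℕ × ℕ} (h : WkRel k p q) :
    q.2 = p.2 + 1 ∧ 1 ≤ p.1 ∧ p.1 ≤ q.1 ∧ q.1 ≤ p.1 + 1 ∧ q.1 ≤ k + 2 := by
  rcases h with ⟨h1, h2, h3, h4⟩ | ⟨y, hy1, hy2, h⟩
  · omega
  · rcases h with ⟨x, hx1, hx2, hp, hq⟩ | ⟨hp, hq⟩ | ⟨hp, hq⟩ <;> subst hp <;> subst hq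
    · have e : 4 * k * (y-1) = 4 * (k * (y-1)) := by ring
      dsimp only
      omega
    · have := four_le_mul hk hy1
      dsimp only
      omega
    · have := four_le_mul hk hy1
      dsimp only
      omega

/-- special (non-row) clause of the relation -/
def SpRel (k : ℕ) (p q : ℕ × ℕ) : Prop :=
  ∃ y, 1 ≤ y ∧ y ≤ 3 * k + 6 ∧
    ((∃ x, 1 ≤ x ∧ x ≤ k - 1 ∧ p = (x, 4 * k * (y - 1) + 4 * x - 3) ∧
        q = (x + 1, 4 * k * (y - 1) + 4 * x - 2)) ∨
      (p = (k, 4 * k * y - 3) ∧ q = (k + 1, 4 * k * y - 2)) ∨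
      (p = (k + 1, 4 * k * y - 2) ∧ q = (k + 2, 4 * k * y - 1)))

lemma WkRel_cases {p q : ℕ × ℕ} (h : WkRel k p q) :
    (1 ≤ p.1 ∧ p.1 ≤ k ∧ q.1 = p.1 ∧ q.2 = p.2 + 1) ∨ SpRel k p q := h

/-- mod-4 and row facts for special edges -/
lemma SpRel_facts (hk : 1 ≤ k) {p q : ℕ × ℕ} (h : SpRel k p q) :
    q.1 = p.1 + 1 ∧
    ((p.2 % 4 = 1 ∧ p.1 ≤ k) ∨ (p.2 % 4 = 2 ∧ p.1 = k + 1)) := by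
  obtain ⟨y, hy1, hy2, h⟩ := h
  rcases h with ⟨x, hx1, hx2, hp, hq⟩ | ⟨hp, hq⟩ | ⟨hp, hq⟩ <;> subst hp <;> subst hq
  · have e : 4 * k * (y-1) = 4 * (k * (y-1)) := by ring
    dsimp only
    omega
  · have e : 4 * k * y = 4 * (k * y) := by ring
    have := four_le_mul hk hy1
    dsimp only
    omega
  · have e : 4 * k * y = 4 * (k * y) := by ring
    have := four_le_mul hk hy1
    dsimp only
    omega

/-- helper: uniqueness of (block, offset) decomposition -/
lemma kblock_unique (hk : 1 ≤ k) {a b x x' : ℕ} (hx1 : 1 ≤ x) (hx2 : x ≤ k)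
    (hx1' : 1 ≤ x') (hx2' : x' ≤ k) (h : k * a + x = k * b + x') : a = b ∧ x = x' := by
  rcases lt_trichotomy a b with hab | hab | hab
  · have h2 : k * a + k ≤ k * b := by
      calc k * a + k = k * (a + 1) := by ring
      _ ≤ k * b := Nat.mul_le_mul_left k (by omega)
    omega
  · constructor
    · exact hab
    · subst hab; omega
  · have h2 : k * b + k ≤ k * a := by
      calc k * b + k = k * (b + 1) := by ring
      _ ≤ k * a := Nat.mul_le_mul_left k (by omega)
    omega

/-- at most one special edge per column -/
lemma SpRel_unique (hk : 1 ≤ k) {p q p' q' : ℕ × ℕ} (h : SpRel k p q) (h' : SpRel k p' q')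
    (hc : p.2 = p'.2) : p = p' ∧ q = q' := by
  obtain ⟨y, hy1, hy2, h⟩ := h
  obtain ⟨y', hy1', hy2', h'⟩ := h'
  rcases h with ⟨x, hx1, hx2, hp, hq⟩ | ⟨hp, hq⟩ | ⟨hp, hq⟩ <;>
    rcases h' with ⟨x', hx1', hx2', hp', hq'⟩ | ⟨hp', hq'⟩ | ⟨hp', hq'⟩ <;>
      subst hp <;> subst hq <;> subst hp' <;> subst hq' <;>
        dsimp only at hc ⊢ <;>
          simp only [Prod.mk.injEq]
  · -- diag diag
    have e : 4 * k * (y-1) = 4 * (k * (y-1)) := by ring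
    have e' : 4 * k * (y'-1) = 4 * (k * (y'-1)) := by ring
    have h3 : k * (y-1) + x = k * (y'-1) + x' := by omega
    have := kblock_unique hk hx1 (by omega) hx1' (by omega) h3
    omega
  · -- diag hair1
    have e : 4 * k * (y-1) = 4 * (k * (y-1)) := by ring
    have e2' : 4 * k * y' = 4 * (k * y') := by ring
    have e0' : k * (y' - 1 + 1) = k * (y'-1) + k := by ring
    have e1' : y' - 1 + 1 = y' := by omega
    rw [e1'] at e0'
    have h3 : k * (y-1) + x = k * (y'-1) + k := by omega
    have := kblock_unique hk hx1 (by omega) (by omega) (le_refl k) h3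
    omega
  · -- diag hair2 : mod 4 clash
    have e : 4 * k * (y-1) = 4 * (k * (y-1)) := by ring
    have e' : 4 * k * y' = 4 * (k * y') := by ring
    have h4 : 4 ≤ 4 * k * y' := four_le_mul hk hy1'
    omega
  · -- hair1 diag
    have e' : 4 * k * (y'-1) = 4 * (k * (y'-1)) := by ring
    have e2 : 4 * k * y = 4 * (k * y) := by ring
    have e0 : k * (y - 1 + 1) = k * (y-1) + k := by ring
    have e1 : y - 1 + 1 = y := by omega
    rw [e1] at e0
    have h3 : k * (y-1) + k = k * (y'-1) + x' := by omega
    have := kblock_unique hk (by omega) (le_refl k) hx1' (by omega) h3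
    omega
  · -- hair1 hair1
    have e2 : 4 * k * y = 4 * (k * y) := by ring
    have e0 : k * (y - 1 + 1) = k * (y-1) + k := by ring
    have e1 : y - 1 + 1 = y := by omega
    rw [e1] at e0
    have e2' : 4 * k * y' = 4 * (k * y') := by ring
    have e0' : k * (y' - 1 + 1) = k * (y'-1) + k := by ring
    have e1' : y' - 1 + 1 = y' := by omega
    rw [e1'] at e0'
    have h4 := four_le_mul hk hy1
    have h4' := four_le_mul hk hy1'
    have h3 : k * (y-1) + k = k * (y'-1) + k := by omega
    have := kblock_unique hk (by omega) (le_refl k) (by omega) (le_refl k) h3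
    have hyy : y = y' := by omega
    subst hyy
    simp
  · -- hair1 hair2 mod4 clash
    have e : 4 * k * y = 4 * (k * y) := by ring
    have e' : 4 * k * y' = 4 * (k * y') := by ring
    have h4 := four_le_mul hk hy1
    have h4' := four_le_mul hk hy1'
    omega
  · -- hair2 diag mod4 clash
    have e' : 4 * k * (y'-1) = 4 * (k * (y'-1)) := by ring
    have e : 4 * k * y = 4 * (k * y) := by ring
    have h4 := four_le_mul hk hy1
    omega
  · -- hair2 hair1 mod4 clash
    have e : 4 * k * y = 4 * (k * y) := by ring
    have e' : 4 * k * y' = 4 * (k * y') := by ring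
    have h4 := four_le_mul hk hy1
    have h4' := four_le_mul hk hy1'
    omega
  · -- hair2 hair2
    have e2 : 4 * k * y = 4 * (k * y) := by ring
    have e0 : k * (y - 1 + 1) = k * (y-1) + k := by ring
    have e1 : y - 1 + 1 = y := by omega
    rw [e1] at e0
    have e2' : 4 * k * y' = 4 * (k * y') := by ring
    have e0' : k * (y' - 1 + 1) = k * (y'-1) + k := by ring
    have e1' : y' - 1 + 1 = y' := by omega
    rw [e1'] at e0'
    have h4 := four_le_mul hk hy1
    have h4' := four_le_mul hk hy1'
    have h3 : k * (y-1) + k = k * (y'-1) + k := by omega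
    have := kblock_unique hk (by omega) (le_refl k) (by omega) (le_refl k) h3
    have hyy : y = y' := by omega
    subst hyy
    simp
end WkAux

/- ===== the drawing ===== -/
section Drawing
variable {k : ℕ}

def layerOf (k : ℕ) (v : WkVert k) : Finset (WkVert k) :=
  if v.val.2 % 2 = 1 then V1 k else V2 k

def posW (k : ℕ) (v : WkVert k) : ℕ := posIn (keyN k) (layerOf k v) v

lemma posW_eq_V1 {v : WkVert k} (hv : v ∈ V1 k) :
    posW k v = posIn (keyN k) (V1 k) v := by
  unfold posW layerOf
  rw [if_pos (mem_V1_iff.1 hv)]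

lemma posW_eq_V2 {v : WkVert k} (hv : v ∈ V2 k) :
    posW k v = posIn (keyN k) (V2 k) v := by
  unfold posW layerOf
  rw [if_neg]
  have := mem_V2_iff.1 hv
  omega

lemma keyN_inj_on (hk : 1 ≤ k) (s : Finset (WkVert k)) :
    ∀ a ∈ s, ∀ b ∈ s, keyN k a = keyN k b → a = b :=
  fun a _ b _ h => key_inj hk h

def DW (k : ℕ) (hk : 1 ≤ k) : TwoLayerDrawing (Wk k) (V1 k) (V2 k) where
  pos := posW k
  cover v := by
    rcases Nat.mod_two_eq_zero_or_one v.val.2 with h | h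
    · right; exact mem_V2_iff.2 h
    · left; exact mem_V1_iff.2 h
  disj v := by
    rintro ⟨h1, h2⟩
    rw [mem_V1_iff] at h1; rw [mem_V2_iff] at h2
    omega
  bipart u v huv := by
    rw [Wk, SimpleGraph.fromRel_adj] at huv
    rcases huv.2 with h' | h'
    · have hc := (WkRel_facts hk h').1
      rcases Nat.mod_two_eq_zero_or_one u.val.2 with hp | hp
      · right; exact ⟨mem_V2_iff.2 hp, mem_V1_iff.2 (by omega)⟩
      · left; exact ⟨mem_V1_iff.2 hp, mem_V2_iff.2 (by omega)⟩
    · have hc := (WkRel_facts hk h').1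
      rcases Nat.mod_two_eq_zero_or_one u.val.2 with hp | hp
      · right; exact ⟨mem_V2_iff.2 hp, mem_V1_iff.2 (by omega)⟩
      · left; exact ⟨mem_V1_iff.2 hp, mem_V2_iff.2 (by omega)⟩
  bijX := by
    have h := posIn_bijOn (s := V1 k) (key := keyN k) (keyN_inj_on hk _)
    exact h.congr (fun v hv => (posW_eq_V1 (by exact_mod_cast hv)).symm)
  bijY := by
    have h := posIn_bijOn (s := V2 k) (key := keyN k) (keyN_inj_on hk _)
    exact h.congr (fun v hv => (posW_eq_V2 (by exact_mod_cast hv)).symm)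

lemma lex_DW (k : ℕ) (hk : 1 ≤ k) : LexSorted (DW k hk) := by
  intro u v h
  rcases h with ⟨hu, hv⟩ | ⟨hu, hv⟩
  · show posW k u < posW k v ↔ _
    rw [posW_eq_V1 hu, posW_eq_V1 hv,
      posIn_lt_iff hu hv (keyN_inj_on hk _), key_lt_iff hk]
  · show posW k u < posW k v ↔ _
    rw [posW_eq_V2 hu, posW_eq_V2 hv,
      posIn_lt_iff hu hv (keyN_inj_on hk _), key_lt_iff hk]

end Drawing

/- ===== edges, bases, tags ===== -/
section Edges
variable {k : ℕ}

lemma edge_base {e : Sym2 (WkVert k)} (he : e ∈ (Wk k).edgeSet) :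
    ∃ p q : WkVert k, e = s(p, q) ∧ WkRel k p.val q.val := by
  induction e using Sym2.ind with
  | _ u v =>
    rw [SimpleGraph.mem_edgeSet, Wk, SimpleGraph.fromRel_adj] at he
    rcases he.2 with h | h
    · exact ⟨u, v, rfl, h⟩
    · exact ⟨v, u, Sym2.eq_swap, h⟩

/-- the tag of an edge: the pair of coordinates of its endpoints, lower column first -/
def tagE (k : ℕ) : Sym2 (WkVert k) → (ℕ × ℕ) × (ℕ × ℕ) :=
  Sym2.lift ⟨fun a b =>
    if a.val.2 < b.val.2 ∨ (a.val.2 = b.val.2 ∧ a.val.1 ≤ b.val.1) then (a.val, b.val)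
    else (b.val, a.val), by
    intro a b
    dsimp only
    by_cases h1 : a.val.2 < b.val.2 ∨ (a.val.2 = b.val.2 ∧ a.val.1 ≤ b.val.1) <;>
      by_cases h2 : b.val.2 < a.val.2 ∨ (b.val.2 = a.val.2 ∧ b.val.1 ≤ a.val.1)
    · have hab : a.val = b.val := Prod.ext (by omega) (by omega)
      rw [if_pos h1, if_pos h2, hab]
    · rw [if_pos h1, if_neg h2]
    · rw [if_neg h1, if_pos h2]
    · exfalso; omega⟩

lemma tagE_base (hk : 1 ≤ k) {p q : WkVert k} (h : WkRel k p.val q.val) :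
    tagE k s(p, q) = (p.val, q.val) := by
  have hc := (WkRel_facts hk h).1
  unfold tagE
  rw [Sym2.lift_mk]
  dsimp only
  rw [if_pos (by omega)]

end Edges

/- ===== crossing classification ===== -/
section Classify
variable {k : ℕ}

lemma cross_classify (hk : 1 ≤ k) (D : TwoLayerDrawing (Wk k) (V1 k) (V2 k))
    (hlex : LexSorted D) {p q p' q' : WkVert k}
    (hpq : WkRel k p.val q.val) (hpq' : WkRel k p'.val q'.val)
    (hcross : D.Crosses s(p, q) s(p', q')) :
    (q'.val.2 = p.val.2 ∧ p.val.1 < q'.val.1) ∨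
      (p'.val.2 = q.val.2 ∧ p'.val.1 < q.val.1) := by
  obtain ⟨hcol, hr1, hr2, hr3, _⟩ := WkRel_facts hk hpq
  obtain ⟨hcol', hr1', hr2', hr3', _⟩ := WkRel_facts hk hpq'
  obtain ⟨x₁, y₁, x₂, y₂, hx₁, hx₂, hy₁, hy₂, he₁, he₂, hps⟩ := hcross
  rw [hlex x₁ x₂ (Or.inl ⟨hx₁, hx₂⟩), hlex x₂ x₁ (Or.inl ⟨hx₂, hx₁⟩),
    hlex y₁ y₂ (Or.inr ⟨hy₁, hy₂⟩), hlex y₂ y₁ (Or.inr ⟨hy₂, hy₁⟩)] at hps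
  have px₁ := mem_V1_iff.1 hx₁
  have px₂ := mem_V1_iff.1 hx₂
  have py₁ := mem_V2_iff.1 hy₁
  have py₂ := mem_V2_iff.1 hy₂
  rcases Sym2.eq_iff.1 he₁ with ⟨rfl, rfl⟩ | ⟨rfl, rfl⟩ <;>
    rcases Sym2.eq_iff.1 he₂ with ⟨rfl, rfl⟩ | ⟨rfl, rfl⟩ <;>
      omega

end Classify

/- ===== the counting argument ===== -/
section Count
variable {k : ℕ}

lemma count_le (hk : 1 ≤ k) (D : TwoLayerDrawing (Wk k) (V1 k) (V2 k))
    (hlex : LexSorted D) : D.IsKPlanar k := by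
  intro e he
  obtain ⟨p, q, rfl, hrel⟩ := edge_base he
  obtain ⟨hcol, hr1, hr2, hr3, hr4⟩ := WkRel_facts hk hrel
  set CS := {e' | e' ∈ (Wk k).edgeSet ∧ D.Crosses s(p, q) e'} with hCS
  have htaginj : Set.InjOn (tagE k) CS := by
    intro e₁ h₁ e₂ h₂ ht
    obtain ⟨p₁, q₁, rfl, hrel₁⟩ := edge_base h₁.1
    obtain ⟨p₂, q₂, rfl, hrel₂⟩ := edge_base h₂.1
    rw [tagE_base hk hrel₁, tagE_base hk hrel₂] at ht
    rw [Prod.ext_iff] at ht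
    rw [Subtype.ext ht.1, Subtype.ext ht.2]
  set A : Finset ((ℕ × ℕ) × (ℕ × ℕ)) :=
    (Finset.Ioc p.val.1 k).image
      (fun r => ((r, p.val.2 - 1), (r, p.val.2))) with hA
  set B : Finset ((ℕ × ℕ) × (ℕ × ℕ)) :=
    (Finset.Ioc 0 (min k (q.val.1 - 1))).image
      (fun r => ((r, p.val.2 + 1), (r, p.val.2 + 2))) with hB
  set C : Set ((ℕ × ℕ) × (ℕ × ℕ)) :=
    {z | ∃ a b : WkVert k, z = (a.val, b.val) ∧ SpRel k a.val b.val ∧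
      ((b.val.2 = p.val.2 ∧ p.val.1 < b.val.1) ∨
        (a.val.2 = p.val.2 + 1 ∧ a.val.1 < q.val.1))} with hC
  -- C is a subsingleton
  have hCsub : C.Subsingleton := by
    rintro z₁ ⟨a₁, b₁, rfl, hsp₁, hcond₁⟩ z₂ ⟨a₂, b₂, rfl, hsp₂, hcond₂⟩
    have hb₁ := (WkRel_facts hk (Or.inr hsp₁ : WkRel k a₁.val b₁.val)).1
    have hb₂ := (WkRel_facts hk (Or.inr hsp₂ : WkRel k a₂.val b₂.val)).1
    have hm₁ := (SpRel_facts hk hsp₁).2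
    have hm₂ := (SpRel_facts hk hsp₂).2
    have hcc : a₁.val.2 = a₂.val.2 := by omega
    have := SpRel_unique hk hsp₁ hsp₂ hcc
    rw [this.1, this.2]
  -- the image of the crossing set is inside A ∪ B ∪ C
  have hsub : tagE k '' CS ⊆ ↑A ∪ ↑B ∪ C := by
    rintro z ⟨e', ⟨he', hcr⟩, rfl⟩
    obtain ⟨p', q', rfl, hrel'⟩ := edge_base he'
    obtain ⟨hcol', hr1', hr2', hr3', hr4'⟩ := WkRel_facts hk hrel'
    have hclass := cross_classify hk D hlex hrel hrel' hcr
    rw [tagE_base hk hrel']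
    rcases WkRel_cases hrel' with hrow | hsp
    · rcases hclass with ⟨h1, h2⟩ | ⟨h1, h2⟩
      · left; left
        simp only [hA, Finset.coe_image, Set.mem_image, Finset.mem_coe, Finset.mem_Ioc]
        refine ⟨p'.val.1, ⟨by omega, by omega⟩, ?_⟩
        have e1 : ((p'.val.1 : ℕ), p.val.2 - 1) = p'.val := (Prod.ext (by omega) (by omega)).symm
        have e2 : ((p'.val.1 : ℕ), p.val.2) = q'.val := (Prod.ext (by omega) (by omega)).symm
        rw [e1, e2]
      · left; right
        simp only [hB, Finset.coe_image, Set.mem_image, Finset.mem_coe, Finset.mem_Ioc]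
        refine ⟨p'.val.1, ⟨by omega, by omega⟩, ?_⟩
        have e1 : ((p'.val.1 : ℕ), p.val.2 + 1) = p'.val := (Prod.ext (by omega) (by omega)).symm
        have e2 : ((p'.val.1 : ℕ), p.val.2 + 2) = q'.val := (Prod.ext (by omega) (by omega)).symm
        rw [e1, e2]
    · right
      refine ⟨p', q', rfl, hsp, ?_⟩
      omega
  -- cardinality bookkeeping
  have h0 : CS.ncard = (tagE k '' CS).ncard := (Set.ncard_image_of_injOn htaginj).symm
  have hAcard : A.card ≤ k - p.val.1 := by
    calc A.card ≤ (Finset.Ioc p.val.1 k).card := Finset.card_image_le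
    _ = k - p.val.1 := Nat.card_Ioc _ _
  have hBcard : B.card ≤ min k (q.val.1 - 1) := by
    calc B.card ≤ (Finset.Ioc 0 (min k (q.val.1 - 1))).card := Finset.card_image_le
    _ = min k (q.val.1 - 1) := by rw [Nat.card_Ioc]; omega
  have hCcard : C.ncard ≤ 1 := by
    rcases hCsub.eq_empty_or_singleton with h | ⟨z, h⟩ <;> simp [h]
  have hkey : CS.ncard ≤ A.card + B.card + C.ncard := by
    rcases hCsub.eq_empty_or_singleton with hCe | ⟨z, hCe⟩
    · have hTeq : (↑A ∪ ↑B ∪ C : Set ((ℕ × ℕ) × (ℕ × ℕ))) = ↑(A ∪ B) := by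
        rw [hCe, Set.union_empty, Finset.coe_union]
      have hle := Set.ncard_le_ncard hsub (by rw [hTeq]; exact (A ∪ B).finite_toSet)
      rw [hTeq, Set.ncard_coe_finset] at hle
      have hc := Finset.card_union_le A B
      omega
    · have hTeq : (↑A ∪ ↑B ∪ C : Set ((ℕ × ℕ) × (ℕ × ℕ))) = ↑(A ∪ B ∪ {z}) := by
        rw [hCe, Finset.coe_union, Finset.coe_union, Finset.coe_singleton]
      have hle := Set.ncard_le_ncard hsub (by rw [hTeq]; exact Finset.finite_toSet _)
      rw [hTeq, Set.ncard_coe_finset] at hle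
      have hc := Finset.card_union_le (A ∪ B) ({z} : Finset _)
      have hc2 := Finset.card_union_le A B
      have hz : ({z} : Finset ((ℕ × ℕ) × (ℕ × ℕ))).card = 1 := Finset.card_singleton z
      have hC1 : C.ncard = 1 := by rw [hCe]; exact Set.ncard_singleton z
      omega
  rcases WkRel_cases hrel with hrow | hsp
  · -- row edge: (k - x) + min k (x-1) + 1 ≤ k
    omega
  · -- special edge: C is empty, (k - p.1) + min k (q.1 - 1) ≤ k
    have hCempty : C = ∅ := by
      rw [Set.eq_empty_iff_forall_notMem]
      rintro z ⟨a, b, rfl, hsp', hcond⟩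
      have hb := (WkRel_facts hk (Or.inr hsp' : WkRel k a.val b.val)).1
      have hm := (SpRel_facts hk hsp').2
      have hma := (SpRel_facts hk hsp').1
      have hme := (SpRel_facts hk hsp).2
      have hmea := (SpRel_facts hk hsp).1
      omega
    have hC0 : C.ncard = 0 := by rw [hCempty]; simp
    have hq1 := (SpRel_facts hk hsp).1
    omega

end Count

theorem stmt10 (k : ℕ) (hk : 1 ≤ k) :
    IsTwoLayerKPlanar (Wk k) k ∧
      ∃ D : TwoLayerDrawing (Wk k) (V1 k) (V2 k), LexSorted D ∧ D.IsKPlanar k := by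
  have hD := lex_DW k hk
  have hP := count_le hk (DW k hk) hD
  exact ⟨⟨V1 k, V2 k, DW k hk, hP⟩, DW k hk, hD, hP⟩
end
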